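/- arXiv:1801.04614 — 9 statements merged into one kernel-verified Lean document; each statement's English description precedes it below -/
import Mathlib

section
/- Let a, b and d be pairwise coprime odd integers with d > 1 (d positive), and let β ≥ 2 be an integer. Then there exists a positive integer k such that 2^β·d divides a^k + b^k if and only if 2^β divides a + b and, for every prime p dividing d, the multiplicative order of a·b^{-1} modulo p is exactly divisible by 2 (that is, 2 divides it but 4 does not). -/
open Finset in
private lemma intCast_zmod_two_eq_one_iff_odd (a : ℤ) : (a : ZMod 2) = 1 ↔ Odd a := by
  have h : ∀ x : ZMod 2, x = 1 ↔ ¬ x = 0 := by decide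
  have h2 : (a : ZMod 2) = 0 ↔ (2:ℤ) ∣ a := by
    rw [ZMod.intCast_zmod_eq_zero_iff_dvd]; norm_num
  rw [h, h2, Int.two_dvd_ne_zero, Int.odd_iff]

open Finset in
private lemma pow_add_pow_eq (x y : ℤ) {n : ℕ} (hn : Odd n) :
    x ^ n + y ^ n = (∑ i ∈ range n, x ^ i * (-y) ^ (n - 1 - i)) * (x + y) := by
  have h := geom_sum₂_mul x (-y) n
  rw [hn.neg_pow, sub_neg_eq_add, sub_neg_eq_add] at h
  exact h.symm

open Finset in
private lemma cofactor_odd {x y : ℤ} (hx : Odd x) (hy : Odd y) {n : ℕ} (hn : Odd n) :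
    Odd (∑ i ∈ range n, x ^ i * (-y) ^ (n - 1 - i)) := by
  rw [← intCast_zmod_two_eq_one_iff_odd]
  have hx2 : (x : ZMod 2) = 1 := (intCast_zmod_two_eq_one_iff_odd x).2 hx
  have hy2 : (y : ZMod 2) = 1 := (intCast_zmod_two_eq_one_iff_odd y).2 hy
  have hneg : (-1 : ZMod 2) = 1 := by decide
  push_cast
  rw [Finset.sum_congr rfl (fun i _ => by rw [hx2, hy2, hneg, one_pow, one_pow, one_mul])]
  rw [Finset.sum_const, Finset.card_range, nsmul_eq_mul, mul_one]
  have : Odd (n : ℤ) := Int.odd_coe_nat n |>.2 hn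
  exact_mod_cast (intCast_zmod_two_eq_one_iff_odd (n : ℤ)).2 this

open Finset in
private lemma key_step {p : ℕ} (hpo : Odd p) {x y : ℤ}
    (h : (p : ℤ) ∣ x + y) : (p : ℤ) * (x + y) ∣ x ^ p + y ^ p := by
  have hfac := pow_add_pow_eq x y hpo
  have hpS : (p : ℤ) ∣ ∑ i ∈ range p, x ^ i * (-y) ^ (p - 1 - i) := by
    rw [← ZMod.intCast_zmod_eq_zero_iff_dvd]
    have hxy : (x : ZMod p) = -(y : ZMod p) := by
      have h0 : ((x + y : ℤ) : ZMod p) = 0 := (ZMod.intCast_zmod_eq_zero_iff_dvd _ p).2 h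
      push_cast at h0
      linear_combination h0
    push_cast
    calc ∑ i ∈ range p, (x : ZMod p) ^ i * (-(y : ZMod p)) ^ (p - 1 - i)
        = ∑ _i ∈ range p, (-(y : ZMod p)) ^ (p - 1) := by
          refine Finset.sum_congr rfl fun i hi => ?_
          rw [hxy, ← pow_add]
          congr 1
          have : i < p := Finset.mem_range.1 hi
          omega
      _ = 0 := by
          rw [Finset.sum_const, Finset.card_range, nsmul_eq_mul, ZMod.natCast_self, zero_mul]
  obtain ⟨S', hS'⟩ := hpS
  rw [hfac, hS']
  exact ⟨S', by ring⟩

private lemma pow_pow_dvd {p : ℕ} (hpo : Odd p) {x y : ℤ}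
    (h : (p : ℤ) ∣ x + y) (e : ℕ) : (p : ℤ) ^ e ∣ x ^ p ^ e + y ^ p ^ e := by
  induction e with
  | zero => simpa using one_dvd _
  | succ e ih =>
    have hXY : (p : ℤ) ∣ x ^ p ^ e + y ^ p ^ e :=
      h.trans (Odd.add_dvd_pow_add_pow x y (hpo.pow))
    have h2 := key_step hpo hXY
    have hx : x ^ p ^ (e + 1) = (x ^ p ^ e) ^ p := by rw [← pow_mul, pow_succ]
    have hy : y ^ p ^ (e + 1) = (y ^ p ^ e) ^ p := by rw [← pow_mul, pow_succ]
    rw [hx, hy]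
    calc (p : ℤ) ^ (e + 1) = p * p ^ e := by ring
      _ ∣ p * (x ^ p ^ e + y ^ p ^ e) := mul_dvd_mul_left _ ih
      _ ∣ (x ^ p ^ e) ^ p + (y ^ p ^ e) ^ p := h2

private lemma prime_pow_dvd {p : ℕ} (hpo : Odd p) {x y : ℤ}
    (h : (p : ℤ) ∣ x + y) {n e : ℕ} (hn : Odd n) (hpe : p ^ e ∣ n) :
    (p : ℤ) ^ e ∣ x ^ n + y ^ n := by
  obtain ⟨q, rfl⟩ := hpe
  have hq : Odd q := (Nat.odd_mul.1 hn).2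
  rw [pow_mul, pow_mul]
  exact (pow_pow_dvd hpo h e).trans (Odd.add_dvd_pow_add_pow _ _ hq)
/-- Let `a`, `b`, `d` be pairwise coprime odd integers with `d > 1`, and `β ≥ 2`.
Then `2^β·d ∣ a^k + b^k` for some positive integer `k` if and only if `2^β ∣ a + b`
and for every prime `p` dividing `d`, the order of `a·b⁻¹` modulo `p` is exactly
divisible by `2`. -/
theorem two_pow_mul_good_iff
    (a b : ℤ) (d : ℕ) (ha : Odd a) (hb : Odd b) (hd : Odd (d : ℤ))
    (hab : IsCoprime a b) (had : IsCoprime a (d : ℤ)) (hbd : IsCoprime b (d : ℤ))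
    (hd1 : 1 < d) (β : ℕ) (hβ : 2 ≤ β) :
    (∃ k : ℕ, 0 < k ∧ ((2 ^ β * d : ℕ) : ℤ) ∣ a ^ k + b ^ k) ↔
      ((2 ^ β : ℤ) ∣ a + b ∧
        ∀ p : ℕ, p.Prime → p ∣ d →
          2 ∣ orderOf ((a : ZMod p) * (b : ZMod p)⁻¹) ∧
            ¬ 4 ∣ orderOf ((a : ZMod p) * (b : ZMod p)⁻¹)) := by
  have hdnat : Odd d := by
    rw [Int.odd_coe_nat] at hd; exact hd
  have hd0 : d ≠ 0 := by omega
  constructor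
  · rintro ⟨k, hk0, hk⟩
    have hcast : ((2 ^ β * d : ℕ) : ℤ) = 2 ^ β * (d : ℤ) := by push_cast; ring
    rw [hcast] at hk
    have h2β : (2 : ℤ) ^ β ∣ a ^ k + b ^ k := (dvd_mul_right _ _).trans hk
    have h4 : (4 : ℤ) ∣ a ^ k + b ^ k := by
      refine dvd_trans ?_ h2β
      have : (4 : ℤ) = 2 ^ 2 := by norm_num
      exact this ▸ pow_dvd_pow 2 hβ
    -- k must be odd
    have hkodd : Odd k := by
      by_contra hke
      rw [Nat.not_odd_iff_even] at hke
      obtain ⟨j, rfl⟩ := hke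
      have h40 : ((a ^ (j + j) + b ^ (j + j) : ℤ) : ZMod 4) = 0 := by
        rw [ZMod.intCast_zmod_eq_zero_iff_dvd]
        exact_mod_cast h4
      have hsq : ∀ x : ℤ, Odd x → ((x : ZMod 4)) ^ 2 = 1 := by
        intro x hx
        obtain ⟨c, rfl⟩ := hx
        have : ∀ y : ZMod 4, (2 * y + 1) ^ 2 = 1 := by decide
        push_cast
        exact this _
      have : ((a ^ (j + j) + b ^ (j + j) : ℤ) : ZMod 4) = 2 := by
        push_cast
        have hj : ∀ x : ℤ, Odd x → ((x : ZMod 4)) ^ (j + j) = 1 := by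
          intro x hx
          have : (x : ZMod 4) ^ (j + j) = ((x : ZMod 4) ^ 2) ^ j := by
            rw [← pow_mul]; ring_nf
          rw [this, hsq x hx, one_pow]
        rw [hj a ha, hj b hb]
        decide
      rw [this] at h40
      exact absurd h40 (by decide)
    refine ⟨?_, ?_⟩
    · -- 2^β ∣ a + b
      have hfac := pow_add_pow_eq a b hkodd
      have hSodd := cofactor_odd ha hb hkodd
      rw [hfac] at h2β
      have hcop : IsCoprime ((2 : ℤ) ^ β) (∑ i ∈ Finset.range k, a ^ i * (-b) ^ (k - 1 - i)) := by
        refine IsCoprime.pow_left ?_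
        rw [Int.prime_two.coprime_iff_not_dvd, Int.two_dvd_ne_zero]
        exact Int.odd_iff.mp hSodd
      exact hcop.dvd_of_dvd_mul_left h2β
    · intro p hp hpd
      haveI : Fact p.Prime := ⟨hp⟩
      have hp2 : p ≠ 2 := by
        rintro rfl
        rw [Nat.odd_iff] at hdnat
        omega
      have hpodd : Odd p := hp.odd_of_ne_two hp2
      haveI : Fact (2 < p) := ⟨by rcases hp.two_le.lt_or_eq with h | h; exact h; omega⟩
      have hpddvd : ((p : ℤ)) ∣ a ^ k + b ^ k :=
        (Int.natCast_dvd_natCast.2 hpd).trans ((dvd_mul_left _ _).trans hk)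
      have hpa : ¬ (p : ℤ) ∣ a := by
        have hcop : IsCoprime ((p : ℤ)) a :=
          (had.of_isCoprime_of_dvd_right (Int.natCast_dvd_natCast.2 hpd)).symm
        exact (Nat.prime_iff_prime_int.mp hp).coprime_iff_not_dvd.1 hcop
      have hpb : ¬ (p : ℤ) ∣ b := by
        have hcop : IsCoprime ((p : ℤ)) b :=
          (hbd.of_isCoprime_of_dvd_right (Int.natCast_dvd_natCast.2 hpd)).symm
        exact (Nat.prime_iff_prime_int.mp hp).coprime_iff_not_dvd.1 hcop
      have hA : (a : ZMod p) ≠ 0 := by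
        rw [Ne, ZMod.intCast_zmod_eq_zero_iff_dvd]; exact hpa
      have hB : (b : ZMod p) ≠ 0 := by
        rw [Ne, ZMod.intCast_zmod_eq_zero_iff_dvd]; exact hpb
      set u : ZMod p := (a : ZMod p) * (b : ZMod p)⁻¹ with hu
      have hABk : (a : ZMod p) ^ k = -((b : ZMod p) ^ k) := by
        have h0 : ((a ^ k + b ^ k : ℤ) : ZMod p) = 0 :=
          (ZMod.intCast_zmod_eq_zero_iff_dvd _ p).2 hpddvd
        push_cast at h0
        linear_combination h0
      have huk : u ^ k = -1 := by
        rw [hu, mul_pow, inv_pow, hABk, neg_mul,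
          mul_inv_cancel₀ (pow_ne_zero k hB)]
      have hne : (-1 : ZMod p) ≠ 1 := ZMod.neg_one_ne_one
      set t := orderOf u with htdef
      have ht2k : t ∣ 2 * k := by
        rw [htdef, orderOf_dvd_iff_pow_eq_one, mul_comm, pow_mul, huk]
        ring
      have htk : ¬ t ∣ k := by
        rw [htdef, orderOf_dvd_iff_pow_eq_one, huk]
        exact hne
      constructor
      · by_contra h2t
        have : Nat.Coprime t 2 := ((Nat.Prime.coprime_iff_not_dvd Nat.prime_two).2 h2t).symm
        exact htk (this.dvd_of_dvd_mul_left ht2k)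
      · intro h4t
        have : 4 ∣ 2 * k := h4t.trans ht2k
        obtain ⟨c, hc⟩ := this
        have : k = 2 * c := by omega
        rw [Nat.odd_iff, this] at hkodd
        omega
  · rintro ⟨h2, hord⟩
    classical
    set m : ℕ → ℕ := fun p => orderOf ((a : ZMod p) * (b : ZMod p)⁻¹) / 2 with hm
    have key : ∀ p ∈ d.primeFactors, Odd (m p) ∧ (p : ℤ) ∣ a ^ m p + b ^ m p := by
      intro p hpf
      have hp : p.Prime := Nat.prime_of_mem_primeFactors hpf
      have hpd : p ∣ d := Nat.dvd_of_mem_primeFactors hpf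
      haveI : Fact p.Prime := ⟨hp⟩
      have hp2 : p ≠ 2 := by
        rintro rfl
        rw [Nat.odd_iff] at hdnat
        omega
      haveI : Fact (2 < p) := ⟨by rcases hp.two_le.lt_or_eq with h | h; exact h; omega⟩
      obtain ⟨h2t, h4t⟩ := hord p hp hpd
      set u : ZMod p := (a : ZMod p) * (b : ZMod p)⁻¹ with hu
      have ht0 : orderOf u ≠ 0 := by
        rintro h
        exact h4t (h ▸ dvd_zero 4)
      obtain ⟨mm, hmm⟩ := h2t
      have hmp : m p = mm := by
        simp only [hm, ← hu, hmm]
        omega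
      have hmmodd : Odd mm := by
        rw [Nat.odd_iff]
        by_contra hcon
        exact h4t (by rw [hmm]; omega)
      have hmm0 : mm ≠ 0 := by
        rintro rfl
        rw [hmm] at ht0
        omega
      have hsq : u ^ mm * u ^ mm = 1 := by
        rw [← pow_add, ← two_mul, ← hmm, pow_orderOf_eq_one]
      have hne1 : u ^ mm ≠ 1 := by
        intro hcon
        have := orderOf_dvd_of_pow_eq_one hcon
        rw [hmm] at this
        have := Nat.le_of_dvd (Nat.pos_of_ne_zero hmm0) this
        omega
      have humm : u ^ mm = -1 := by
        rcases mul_self_eq_one_iff.1 hsq with h | h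
        · exact absurd h hne1
        · exact h
      refine ⟨hmp ▸ hmmodd, ?_⟩
      rw [hmp, ← ZMod.intCast_zmod_eq_zero_iff_dvd]
      have hB : (b : ZMod p) ≠ 0 := by
        rw [Ne, ZMod.intCast_zmod_eq_zero_iff_dvd]
        have hcop : IsCoprime ((p : ℤ)) b :=
          (hbd.of_isCoprime_of_dvd_right (Int.natCast_dvd_natCast.2 hpd)).symm
        exact (Nat.prime_iff_prime_int.mp hp).coprime_iff_not_dvd.1 hcop
      have : (a : ZMod p) ^ mm = -((b : ZMod p) ^ mm) := by
        have h1 : u ^ mm * (b : ZMod p) ^ mm = -((b : ZMod p) ^ mm) := by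
          rw [humm]; ring
        rw [hu, mul_pow, inv_pow, inv_mul_cancel_right₀ (pow_ne_zero mm hB)] at h1
        exact h1
      push_cast
      rw [this]
      ring
    set M := ∏ p ∈ d.primeFactors, m p with hM
    have hModd : Odd M :=
      Finset.prod_induction m Odd (fun x y hx hy => hx.mul hy) odd_one
        (fun p hp => (key p hp).1)
    have hkodd : Odd (M * d) := hModd.mul hdnat
    have hkpos : 0 < M * d := by
      rw [Nat.odd_iff] at hkodd
      omega
    refine ⟨M * d, hkpos, ?_⟩
    have hcast : ((2 ^ β * d : ℕ) : ℤ) = 2 ^ β * (d : ℤ) := by push_cast; ring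
    rw [hcast]
    have hcop : IsCoprime ((2 : ℤ) ^ β) (d : ℤ) := by
      refine IsCoprime.pow_left ?_
      rw [Int.prime_two.coprime_iff_not_dvd, Int.two_dvd_ne_zero]
      exact Int.odd_iff.mp hd
    refine IsCoprime.mul_dvd hcop ?_ ?_
    · exact h2.trans (Odd.add_dvd_pow_add_pow a b hkodd)
    · have hdprod : (d : ℤ) = ∏ p ∈ d.primeFactors, (p : ℤ) ^ d.factorization p := by
        have h := Nat.factorization_prod_pow_eq_self hd0
        rw [Finsupp.prod, Nat.support_factorization] at h
        calc (d : ℤ) = ((∏ p ∈ d.primeFactors, p ^ d.factorization p : ℕ) : ℤ) := by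
              rw [h]
          _ = _ := by push_cast; rfl
      rw [hdprod]
      apply Finset.prod_dvd_of_coprime
      · intro p hpf q hqf hne
        have hp : p.Prime := Nat.prime_of_mem_primeFactors hpf
        have hq : q.Prime := Nat.prime_of_mem_primeFactors hqf
        have : IsCoprime ((p : ℤ)) ((q : ℤ)) :=
          Int.isCoprime_iff_gcd_eq_one.2 (by
            simpa using (Nat.coprime_primes hp hq).2 hne)
        exact (this.pow : IsCoprime _ _)
      · intro p hpf
        have hp : p.Prime := Nat.prime_of_mem_primeFactors hpf
        have hpd : p ∣ d := Nat.dvd_of_mem_primeFactors hpf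
        have hp2 : p ≠ 2 := by
          rintro rfl
          rw [Nat.odd_iff] at hdnat
          omega
        have hpodd : Odd p := hp.odd_of_ne_two hp2
        obtain ⟨hmodd, hdvd⟩ := key p hpf
        have hmM : m p ∣ M := Finset.dvd_prod_of_mem m hpf
        obtain ⟨M', hM'⟩ := hmM
        have hModd' : Odd M' := by
          rw [hM'] at hModd
          exact (Nat.odd_mul.1 hModd).2
        have hrw : M * d = m p * (M' * d) := by rw [hM']; ring
        rw [hrw, pow_mul a (m p) (M' * d), pow_mul b (m p) (M' * d)]
        refine prime_pow_dvd hpodd hdvd (hModd'.mul hdnat) ?_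
        exact (Nat.ordProj_dvd d p).trans (dvd_mul_left d M')
end

section
/- Let a, b and d be pairwise coprime odd integers with d > 1 (d positive), and let β ≥ 2 be an integer. Suppose there exists a positive integer k such that 2^β·d divides a^k + b^k. Then the multiplicative order of a·b^{-1} modulo 2^β equals 2, and the multiplicative order of a·b^{-1} modulo 2^β·d is exactly divisible by 2 (2 divides it but 4 does not). -/
/-!
Since `2 ^ β * d ∣ a ^ k + b ^ k`, the residue `x = a * b⁻¹` satisfies `x ^ k = -1`, and `k` is odd
because odd squares are `1` modulo `4`. Then `x ^ (2 * k) = 1` while `x ^ k ≠ 1`, which forces the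
order of `x` to be exactly divisible by `2`. Modulo `2 ^ β` the unit group has order `2 ^ (β - 1)`,
so there the order of `x` is a power of `2`, hence equal to `2`.
-/

open Nat

section PowEqNegOne

variable {M : Type*} [Monoid M] [HasDistribNeg M] {x : M} {k : ℕ}

theorem orderOf_dvd_two_mul_of_pow_eq_neg_one (hx : x ^ k = -1) : orderOf x ∣ 2 * k :=
  orderOf_dvd_of_pow_eq_one <| by rw [mul_comm, pow_mul, hx, neg_one_sq]

theorem two_dvd_orderOf_of_pow_eq_neg_one (hx : x ^ k = -1) (hne : (-1 : M) ≠ 1) :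
    2 ∣ orderOf x := by
  by_contra h
  have hodd : (orderOf x).Coprime 2 := Nat.coprime_two_right.2 (Nat.odd_iff.2 (by omega))
  apply hne
  rw [← hx, ← orderOf_dvd_iff_pow_eq_one]
  exact hodd.dvd_of_dvd_mul_left (orderOf_dvd_two_mul_of_pow_eq_neg_one hx)

theorem not_four_dvd_orderOf_of_pow_eq_neg_one (hx : x ^ k = -1) (hk : Odd k) :
    ¬ 4 ∣ orderOf x := fun h4 => by
  have := h4.trans (orderOf_dvd_two_mul_of_pow_eq_neg_one hx)
  obtain ⟨j, rfl⟩ := hk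
  omega

end PowEqNegOne

theorem Int.odd_of_four_dvd_pow_add_pow {a b : ℤ} {k : ℕ} (ha : Odd a) (hb : Odd b)
    (h : 4 ∣ a ^ k + b ^ k) : Odd k := by
  by_contra hk
  obtain ⟨m, rfl⟩ := Nat.not_odd_iff_even.1 hk
  rw [← two_mul, pow_mul', pow_mul'] at h
  have ha2 := Int.sq_mod_four_eq_one_of_odd (ha.pow : Odd (a ^ m))
  have hb2 := Int.sq_mod_four_eq_one_of_odd (hb.pow : Odd (b ^ m))
  omega

theorem ZMod.intCast_mul_inv_pow_eq_neg_one {n k : ℕ} {a b : ℤ} (hb : IsCoprime b n)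
    (h : (n : ℤ) ∣ a ^ k + b ^ k) : ((a : ZMod n) * (b : ZMod n)⁻¹) ^ k = -1 := by
  have hbu : IsUnit (b : ZMod n) := (ZMod.coe_int_isUnit_iff_isCoprime b n).2 hb.symm
  have hsum : (a : ZMod n) ^ k + (b : ZMod n) ^ k = 0 := by
    exact_mod_cast (ZMod.intCast_zmod_eq_zero_iff_dvd _ n).2 h
  rw [mul_pow, eq_neg_of_add_eq_zero_left hsum, neg_mul, ← mul_pow,
    ZMod.mul_inv_of_unit _ hbu, one_pow]

theorem ZMod.orderOf_dvd_totient {n : ℕ} {x : ZMod n} (hx : IsUnit x) : orderOf x ∣ φ n := by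
  rw [← hx.unit_spec, orderOf_units]
  exact orderOf_dvd_of_pow_eq_one (ZMod.pow_totient _)

theorem ZMod.orderOf_eq_two_of_pow_eq_neg_one {m k : ℕ} (hm : 2 ≤ m) {y : ZMod (2 ^ m)}
    (hk : Odd k) (hy : y ^ k = -1) : orderOf y = 2 := by
  have : Fact (2 < 2 ^ m) := ⟨by
    calc 2 < 2 ^ 2 := by norm_num
      _ ≤ 2 ^ m := Nat.pow_le_pow_right two_pos hm⟩
  have hunit : IsUnit y :=
    IsUnit.of_pow_eq_one (by rw [pow_mul, hy, neg_one_sq]) (mul_ne_zero hk.pos.ne' two_ne_zero)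
  obtain ⟨s, -, hs⟩ := (Nat.dvd_prime_pow Nat.prime_two).1 <| by
    simpa [Nat.totient_prime_pow Nat.prime_two (by omega : 0 < m)] using
      ZMod.orderOf_dvd_totient hunit
  have h2 := two_dvd_orderOf_of_pow_eq_neg_one hy ZMod.neg_one_ne_one
  have h4 := not_four_dvd_orderOf_of_pow_eq_neg_one hy hk
  rw [hs] at h2 h4 ⊢
  have hs0 : s ≠ 0 := by rintro rfl; norm_num at h2
  have hs1 : s < 2 := by
    by_contra! hs
    exact h4 (by simpa using Nat.pow_dvd_pow 2 hs)
  rw [show s = 1 by omega, pow_one]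

theorem order_of_good_two_pow_mul_general
    (a b : ℤ) (d : ℕ) (ha : Odd a) (hb : Odd b)
    (hbd : IsCoprime b (d : ℤ))
    (hd1 : 1 < d) (β : ℕ) (hβ : 2 ≤ β)
    (hgood : ∃ k : ℕ, 0 < k ∧ ((2 ^ β * d : ℕ) : ℤ) ∣ a ^ k + b ^ k) :
    orderOf ((a : ZMod (2 ^ β)) * (b : ZMod (2 ^ β))⁻¹) = 2 ∧
      2 ∣ orderOf ((a : ZMod (2 ^ β * d)) * (b : ZMod (2 ^ β * d))⁻¹) ∧
        ¬ 4 ∣ orderOf ((a : ZMod (2 ^ β * d)) * (b : ZMod (2 ^ β * d))⁻¹) := by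
  obtain ⟨k, -, hdvd⟩ := hgood
  have h4 : (4 : ℤ) ∣ ((2 ^ β * d : ℕ) : ℤ) := by
    exact_mod_cast (Nat.pow_dvd_pow 2 hβ).mul_right d
  have hk : Odd k := Int.odd_of_four_dvd_pow_add_pow ha hb (h4.trans hdvd)
  have hb2 : IsCoprime b 2 := Int.isCoprime_two_right.2 hb
  have hy := ZMod.intCast_mul_inv_pow_eq_neg_one (n := 2 ^ β) (by push_cast; exact hb2.pow_right)
    ((Int.natCast_dvd_natCast.2 (dvd_mul_right _ d)).trans hdvd)
  have hz := ZMod.intCast_mul_inv_pow_eq_neg_one (by push_cast; exact hb2.pow_right.mul_right hbd)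
    hdvd
  have : Fact (2 < 2 ^ β * d) := ⟨by
    calc 2 < 2 ^ 2 * 1 := by norm_num
      _ ≤ 2 ^ β * d := Nat.mul_le_mul (Nat.pow_le_pow_right two_pos hβ) hd1.le⟩
  exact ⟨ZMod.orderOf_eq_two_of_pow_eq_neg_one hβ hk hy,
    two_dvd_orderOf_of_pow_eq_neg_one hz ZMod.neg_one_ne_one,
    not_four_dvd_orderOf_of_pow_eq_neg_one hz hk⟩

/-- Let `a`, `b`, `d` be pairwise coprime odd integers with `d > 1`, and `β ≥ 2`.
If `2^β·d ∣ a^k + b^k` for some positive integer `k`, then the order of `a·b⁻¹`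
modulo `2^β` is `2`, and the order of `a·b⁻¹` modulo `2^β·d` is exactly divisible
by `2`. -/
theorem order_of_good_two_pow_mul
    (a b : ℤ) (d : ℕ) (ha : Odd a) (hb : Odd b) (hd : Odd (d : ℤ))
    (hab : IsCoprime a b) (had : IsCoprime a (d : ℤ)) (hbd : IsCoprime b (d : ℤ))
    (hd1 : 1 < d) (β : ℕ) (hβ : 2 ≤ β)
    (hgood : ∃ k : ℕ, 0 < k ∧ ((2 ^ β * d : ℕ) : ℤ) ∣ a ^ k + b ^ k) :
    orderOf ((a : ZMod (2 ^ β)) * (b : ZMod (2 ^ β))⁻¹) = 2 ∧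
      2 ∣ orderOf ((a : ZMod (2 ^ β * d)) * (b : ZMod (2 ^ β * d))⁻¹) ∧
        ¬ 4 ∣ orderOf ((a : ZMod (2 ^ β * d)) * (b : ZMod (2 ^ β * d))⁻¹) :=
  order_of_good_two_pow_mul_general a b d ha hb hbd hd1 β hβ hgood
end

section
/- Let a and b be coprime odd integers and let β ≥ 2 be an integer. Then 2^β does not divide a + b if and only if for every odd positive integer n there is no positive integer k such that 2^β·n divides a^k + b^k. -/
/-!
Odd squares are `1` modulo `4`, so for even `k` the sum `a ^ k + b ^ k` is `2` modulo `4` and no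
`2 ^ β` with `β ≥ 2` divides it. For odd `k` we have `a ^ k + b ^ k = (a + b) * c` with
`c = ∑ a ^ i * (-b) ^ (k - 1 - i)` a sum of `k` odd terms, hence odd, so every power of `2`
dividing `a ^ k + b ^ k` already divides `a + b`. The converse is the case `n = k = 1`.
-/

namespace Int

variable {a b : ℤ}

theorem odd_geom_sum₂ (ha : Odd a) (hb : Odd b) {k : ℕ} (hk : Odd k) :
    Odd (∑ i ∈ Finset.range k, a ^ i * b ^ (k - 1 - i)) := by
  rw [← ZMod.intCast_eq_one_iff_odd] at ha hb ⊢
  push_cast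
  simpa [ha, hb] using hk.natCast_zmod_two

theorem pow_add_pow_emod_four_of_even (ha : Odd a) (hb : Odd b) {k : ℕ} (hk : Even k) :
    (a ^ k + b ^ k) % 4 = 2 := by
  obtain ⟨m, rfl⟩ := hk
  rw [← mul_two, pow_mul, pow_mul, Int.add_emod, sq_mod_four_eq_one_of_odd ha.pow,
    sq_mod_four_eq_one_of_odd hb.pow]
  rfl

theorem two_pow_dvd_add_of_dvd_pow_add_pow_of_odd (ha : Odd a) (hb : Odd b) {k : ℕ} (hk : Odd k)
    {β : ℕ} (h : 2 ^ β ∣ a ^ k + b ^ k) : 2 ^ β ∣ a + b := by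
  have hfactor : a ^ k + b ^ k = (∑ i ∈ Finset.range k, a ^ i * (-b) ^ (k - 1 - i)) * (a + b) := by
    rw [← sub_neg_eq_add a b, geom_sum₂_mul, hk.neg_pow, sub_neg_eq_add]
  have hcop := (isCoprime_two_left.2 (odd_geom_sum₂ ha hb.neg hk)).pow_left (m := β)
  exact hcop.dvd_of_dvd_mul_left (hfactor ▸ h)

theorem two_pow_dvd_add_of_dvd_pow_add_pow (ha : Odd a) (hb : Odd b) {β : ℕ} (hβ : 2 ≤ β)
    {k : ℕ} (h : 2 ^ β ∣ a ^ k + b ^ k) : 2 ^ β ∣ a + b := by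
  rcases k.even_or_odd with hk | hk
  · have h4 : (4 : ℤ) ∣ a ^ k + b ^ k := (pow_dvd_pow 2 hβ).trans h
    rw [dvd_iff_emod_eq_zero, pow_add_pow_emod_four_of_even ha hb hk] at h4
    exact absurd h4 (by decide)
  · exact two_pow_dvd_add_of_dvd_pow_add_pow_of_odd ha hb hk h

end Int

theorem not_dvd_add_iff_no_odd_good_general
    (a b : ℤ) (ha : Odd a) (hb : Odd b)
    (β : ℕ) (hβ : 2 ≤ β) :
    ¬ (2 ^ β : ℤ) ∣ a + b ↔
      ∀ n : ℕ, 0 < n → Odd n →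
        ¬ ∃ k : ℕ, 0 < k ∧ ((2 ^ β * n : ℕ) : ℤ) ∣ a ^ k + b ^ k := by
  constructor
  · rintro h n - - ⟨k, -, hdvd⟩
    push_cast at hdvd
    exact h (Int.two_pow_dvd_add_of_dvd_pow_add_pow ha hb hβ (dvd_of_mul_right_dvd hdvd))
  · intro h hdvd
    exact h 1 one_pos odd_one ⟨1, one_pos, by simpa using hdvd⟩

/-- Let `a` and `b` be coprime odd integers and `β ≥ 2`. Then `2^β ∤ a + b` if and only if
no odd positive integer `n` is `2^β`-good. -/
theorem not_dvd_add_iff_no_odd_good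
    (a b : ℤ) (ha : Odd a) (hb : Odd b) (hco : IsCoprime a b)
    (β : ℕ) (hβ : 2 ≤ β) :
    ¬ (2 ^ β : ℤ) ∣ a + b ↔
      ∀ n : ℕ, 0 < n → Odd n →
        ¬ ∃ k : ℕ, 0 < k ∧ ((2 ^ β * n : ℕ) : ℤ) ∣ a ^ k + b ^ k :=
  not_dvd_add_iff_no_odd_good_general a b ha hb β hβ
end

section
/- Let a and b be coprime odd integers, let γ be a positive integer with 2^γ exactly dividing a + b, and let β be an integer with 2 ≤ β ≤ γ. Then a positive integer c is 2^β-good if and only if there exist an integer i with 0 ≤ i ≤ γ - β and a positive integer d such that c = 2^i·d and d is 2^γ-good (i.e., 2^γ·d divides a^{k} + b^{k} for some positive integer k). -/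
private lemma odd_sq_mod_four {x : ℤ} (hx : Odd x) : x ^ 2 % 4 = 1 := by
  obtain ⟨m, rfl⟩ := hx
  have h : (2 * m + 1) ^ 2 = 1 + 4 * (m ^ 2 + m) := by ring
  rw [h, Int.add_mul_emod_self_left]
  rfl

private lemma odd_k_factor (a b : ℤ) (ha : Odd a) (hb : Odd b) {k : ℕ} (hk : Odd k) :
    ∃ S : ℤ, Odd S ∧ a ^ k + b ^ k = (a + b) * S := by
  refine ⟨∑ i ∈ Finset.range k, a ^ i * (-b) ^ (k - 1 - i), ?_, ?_⟩
  · rw [Int.odd_iff, Finset.sum_int_mod]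
    have h : ∀ i ∈ Finset.range k, (a ^ i * (-b) ^ (k - 1 - i)) % 2 = 1 := by
      intro i _
      rw [← Int.odd_iff]
      exact (ha.pow).mul (hb.neg.pow)
    rw [Finset.sum_congr rfl h, Finset.sum_const, Finset.card_range, nsmul_eq_mul, mul_one]
    have : Odd (k : ℤ) := by exact_mod_cast hk
    exact Int.odd_iff.mp this
  · have h := geom_sum₂_mul a (-b) k
    have h2 : (-b) ^ k = -b ^ k := hk.neg_pow b
    rw [h2] at h
    linarith [h]

/-- Let `a`, `b` be coprime odd integers, `γ ≥ 1` with `2^γ ‖ a + b`, and `2 ≤ β ≤ γ`.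
Then a positive integer `c` is `2^β`-good if and only if `c = 2^i·d` for some
`0 ≤ i ≤ γ - β` and some `2^γ`-good positive integer `d`. -/
theorem good_iff_two_pow_mul_gamma_good
    (a b : ℤ) (ha : Odd a) (hb : Odd b) (hco : IsCoprime a b)
    (γ : ℕ) (hγ : 1 ≤ γ) (hdvd : (2 ^ γ : ℤ) ∣ a + b) (hndvd : ¬ (2 ^ (γ + 1) : ℤ) ∣ a + b)
    (β : ℕ) (hβ : 2 ≤ β) (hβγ : β ≤ γ) (c : ℕ) (hc : 0 < c) :
    (∃ k : ℕ, 0 < k ∧ ((2 ^ β * c : ℕ) : ℤ) ∣ a ^ k + b ^ k) ↔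
      ∃ i d : ℕ, i ≤ γ - β ∧ 0 < d ∧ c = 2 ^ i * d ∧
        ∃ k : ℕ, 0 < k ∧ ((2 ^ γ * d : ℕ) : ℤ) ∣ a ^ k + b ^ k := by
  -- write a + b = 2^γ * u with u odd
  obtain ⟨u, hu⟩ := hdvd
  have hu_odd : Odd u := by
    rcases Int.even_or_odd u with he | ho
    · exfalso
      obtain ⟨v, rfl⟩ := he
      exact hndvd ⟨v, by rw [hu]; ring⟩
    · exact ho
  constructor
  · rintro ⟨k, hk, hkdvd⟩
    -- k must be odd
    have hkodd : Odd k := by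
      rw [Nat.odd_iff, ← Nat.not_even_iff]
      intro hke
      obtain ⟨m, rfl⟩ := hke
      have h4 : (4 : ℤ) ∣ a ^ (m + m) + b ^ (m + m) := by
        refine dvd_trans ?_ hkdvd
        have h42 : (4 : ℤ) = 2 ^ 2 := by norm_num
        push_cast
        exact dvd_mul_of_dvd_left (h42 ▸ pow_dvd_pow (2:ℤ) hβ) _
      have he1 : a ^ (m + m) = (a ^ m) ^ 2 := by ring
      have he2 : b ^ (m + m) = (b ^ m) ^ 2 := by ring
      rw [he1, he2] at h4
      have h1 := odd_sq_mod_four (ha.pow (n := m))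
      have h2 := odd_sq_mod_four (hb.pow (n := m))
      omega
    -- factorization
    obtain ⟨S, hS_odd, hfac⟩ := odd_k_factor a b ha hb hkodd
    have hfac2 : a ^ k + b ^ k = 2 ^ γ * (u * S) := by rw [hfac, hu]; ring
    have hw_odd : Odd (u * S) := hu_odd.mul hS_odd
    set i := c.factorization 2 with hi_def
    set d := c / 2 ^ i with hd_def
    have hcd : 2 ^ i * d = c := Nat.ordProj_mul_ordCompl_eq_self c 2
    have hd2 : ¬ 2 ∣ d := Nat.not_dvd_ordCompl Nat.prime_two hc.ne'
    have hd_pos : 0 < d := Nat.ordCompl_pos 2 hc.ne'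
    -- β + i ≤ γ
    have h2n : (2:ℕ) ^ (β + i) ∣ 2 ^ β * c := ⟨d, by rw [← hcd]; ring⟩
    have h2 : (2 : ℤ) ^ (β + i) ∣ a ^ k + b ^ k := by
      have := (Int.natCast_dvd_natCast.mpr h2n).trans hkdvd
      push_cast at this
      exact this
    have hβi : β + i ≤ γ := by
      by_contra hlt
      push_neg at hlt
      have h1 : (2 : ℤ) ^ (γ + 1) ∣ 2 ^ (β + i) := pow_dvd_pow 2 (by omega)
      have h3 : (2 : ℤ) ^ γ * 2 ∣ 2 ^ γ * (u * S) := by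
        rw [← pow_succ, ← hfac2]
        exact h1.trans h2
      have hne : ((2:ℤ) ^ γ) ≠ 0 := by positivity
      have h4 : (2 : ℤ) ∣ u * S := (mul_dvd_mul_iff_left hne).mp h3
      have h5 := Int.odd_iff.mp hw_odd
      omega
    refine ⟨i, d, by omega, hd_pos, hcd.symm, k, hk, ?_⟩
    push_cast
    have hdc : (d : ℤ) ∣ (c : ℤ) := Int.natCast_dvd_natCast.mpr (Dvd.intro_left _ hcd)
    have hd_dvd : (d : ℤ) ∣ a ^ k + b ^ k := by
      refine dvd_trans ?_ hkdvd
      push_cast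
      exact dvd_mul_of_dvd_right hdc _
    have h2γ : (2 : ℤ) ^ γ ∣ a ^ k + b ^ k := ⟨u * S, hfac2⟩
    have hcop : IsCoprime ((2:ℤ) ^ γ) (d : ℤ) := by
      refine IsCoprime.pow_left ?_
      rw [Int.prime_two.coprime_iff_not_dvd]
      intro h
      exact hd2 (by exact_mod_cast h)
    exact hcop.mul_dvd h2γ hd_dvd
  · rintro ⟨i, d, hi, hd, hcd, k, hk, hkdvd⟩
    refine ⟨k, hk, ?_⟩
    have h1 : ((2 ^ β * c : ℕ) : ℤ) ∣ ((2 ^ γ * d : ℕ) : ℤ) := by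
      have : (2:ℕ) ^ β * c ∣ 2 ^ γ * d := by
        rw [hcd, ← mul_assoc, ← pow_add]
        exact mul_dvd_mul_right (pow_dvd_pow 2 (by omega)) d
      exact_mod_cast this
    exact h1.trans hkdvd
end

section
/- Let a and b be coprime odd integers with a + b ≠ 0. Then a positive integer c is 2^1-good (i.e., 2c divides a^k + b^k for some positive integer k) if and only if either c = 2d for some positive integer d that is 2^2-good (i.e., 4d divides a^k + b^k for some positive integer k), or c is odd and either c = 1 or there exists an integer s ≥ 1 such that for every prime p dividing c, 2^s exactly divides the multiplicative order of a·b^{-1} modulo p (2^s divides it and 2^{s+1} does not). -/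
/-!
For a prime `p ∤ b` write `x_p = a b⁻¹ ∈ ZMod p`. For odd `p`, `p ∣ a ^ n + b ^ n` iff
`x_p ^ n = -1`, iff `ord x_p ∣ 2n` but `ord x_p ∤ n`; so one exponent `k` working for all
`p ∣ c` forces `2 ^ (v₂ k + 1) ‖ ord x_p` for every such `p`. Conversely, if
`2 ^ (s + 1) ‖ ord x_p` for all `p ∣ c`, then `n = 2 ^ s · M`, with `M` the product of the odd
parts of the orders, satisfies `x_p ^ n = -1` for all `p` at once, and the exponent `n c` lifts
each `p` to the full power of `p` dividing `c`. The extra factor `2` is automatic since `a` and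
`b` are odd.
-/

open Finset

lemma pow_eq_neg_one_iff_orderOf_dvd {R : Type*} [Ring R] [NoZeroDivisors R]
    (hR : (-1 : R) ≠ 1) (x : R) (n : ℕ) :
    x ^ n = -1 ↔ orderOf x ∣ 2 * n ∧ ¬ orderOf x ∣ n := by
  rw [orderOf_dvd_iff_pow_eq_one, orderOf_dvd_iff_pow_eq_one, pow_mul', sq, mul_self_eq_one_iff]
  constructor
  · intro h
    exact ⟨Or.inr h, fun h1 => hR (h.symm.trans h1)⟩
  · rintro ⟨h | h, h1⟩
    exacts [absurd h h1, h]

namespace ZMod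

variable {p : ℕ} [Fact p.Prime]

lemma neg_one_ne_one_of_odd (hp : Odd p) : (-1 : ZMod p) ≠ 1 := by
  have : Fact (2 < p) :=
    ⟨(Fact.out : p.Prime).two_le.lt_of_ne (by rintro rfl; exact absurd hp (by decide))⟩
  exact neg_one_ne_one

lemma intCast_mul_inv_pow_eq_neg_one_iff {a b : ℤ} (hb : ¬ (p : ℤ) ∣ b) (n : ℕ) :
    ((a : ZMod p) * (b : ZMod p)⁻¹) ^ n = -1 ↔ (p : ℤ) ∣ a ^ n + b ^ n := by
  have hb' : (b : ZMod p) ^ n ≠ 0 :=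
    pow_ne_zero _ (mt (intCast_zmod_eq_zero_iff_dvd b p).mp hb)
  rw [← intCast_zmod_eq_zero_iff_dvd, mul_pow, inv_pow, mul_inv_eq_iff_eq_mul₀ hb',
    neg_one_mul, eq_neg_iff_add_eq_zero]
  push_cast
  rfl

lemma not_dvd_of_orderOf_intCast_mul_inv_ne_zero {a b : ℤ}
    (h : orderOf ((a : ZMod p) * (b : ZMod p)⁻¹) ≠ 0) : ¬ (p : ℤ) ∣ b := by
  intro hb
  rw [(intCast_zmod_eq_zero_iff_dvd b p).mpr hb, inv_zero, mul_zero, orderOf_zero] at h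
  exact h rfl

end ZMod

lemma not_dvd_right_of_dvd_pow_add_pow {a b p : ℤ} (hco : IsCoprime a b) (hp : Prime p)
    {k : ℕ} (hk : k ≠ 0) (h : p ∣ a ^ k + b ^ k) : ¬ p ∣ b := by
  intro hpb
  have hpa : p ∣ a := hp.dvd_of_dvd_pow ((dvd_add_left (dvd_pow hpb hk)).mp h)
  exact hp.not_isUnit (hco.isUnit_of_dvd' hpa hpb)

lemma pow_dvd_pow_add_pow_of_dvd_add {R : Type*} [CommRing R] {x y : R} {p j c : ℕ}
    (hc : Odd c) (hpc : p ^ j ∣ c) (h : (p : R) ∣ x + y) : (p : R) ^ j ∣ x ^ c + y ^ c := by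
  obtain ⟨m, rfl⟩ := hpc
  -- lifting the exponent for `x - (-y)`, using that `p ^ j` is odd
  have lift : (p : R) ^ (j + 1) ∣ x ^ p ^ j + y ^ p ^ j := by
    have := dvd_sub_pow_of_dvd_sub (b := -y) (by rwa [sub_neg_eq_add]) j
    rwa [(Nat.odd_mul.mp hc).1.neg_pow, sub_neg_eq_add] at this
  calc (p : R) ^ j ∣ (p : R) ^ (j + 1) := pow_dvd_pow _ j.le_succ
    _ ∣ x ^ p ^ j + y ^ p ^ j := lift
    _ ∣ (x ^ p ^ j) ^ m + (y ^ p ^ j) ^ m := (Nat.odd_mul.mp hc).2.add_dvd_pow_add_pow _ _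
    _ = x ^ (p ^ j * m) + y ^ (p ^ j * m) := by rw [pow_mul, pow_mul]

namespace Nat

variable {p t v m : ℕ}

lemma not_pow_succ_dvd_pow_mul (hp : 0 < p) (hm : ¬ p ∣ m) : ¬ p ^ (v + 1) ∣ p ^ v * m := by
  rwa [pow_succ, Nat.mul_dvd_mul_iff_left (pow_pos hp v)]

lemma pow_succ_dvd_and_not_dvd_of_dvd_pow_succ_mul (hp : p.Prime) (hm : ¬ p ∣ m)
    (h : t ∣ p ^ (v + 1) * m) (h' : ¬ t ∣ p ^ v * m) :
    p ^ (v + 1) ∣ t ∧ ¬ p ^ (v + 2) ∣ t := by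
  refine ⟨?_, fun hv => not_pow_succ_dvd_pow_mul hp.pos hm (hv.trans h)⟩
  obtain ⟨y, z, hy, hz, rfl⟩ := dvd_mul.mp h
  obtain ⟨i, hi, rfl⟩ := (dvd_prime_pow hp).mp hy
  rcases Nat.lt_or_eq_of_le hi with hi | rfl
  · exact absurd (mul_dvd_mul (pow_dvd_pow p (Nat.lt_succ_iff.mp hi)) hz) h'
  · exact dvd_mul_right _ _

end Nat

lemma exists_odd_forall_dvd_two_pow_mul {ι : Type*} {S : Finset ι} {t : ι → ℕ} {s : ℕ}
    (h : ∀ i ∈ S, 2 ^ s ∣ t i ∧ ¬ 2 ^ (s + 1) ∣ t i) :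
    ∃ M, Odd M ∧ ∀ i ∈ S, t i ∣ 2 ^ s * M := by
  refine ⟨∏ i ∈ S, t i / 2 ^ s, prod_induction _ Odd (fun _ _ => Odd.mul) odd_one ?_, ?_⟩
  · intro i hi
    obtain ⟨⟨o, ho⟩, hnot⟩ := h i hi
    rw [ho, Nat.mul_div_cancel_left _ (by positivity), ← Nat.not_even_iff_odd]
    rintro ⟨r, rfl⟩
    exact hnot ⟨r, by rw [ho]; ring⟩
  · intro i hi
    conv_lhs => rw [← Nat.mul_div_cancel' (h i hi).1]
    exact mul_dvd_mul_left _ (dvd_prod_of_mem _ hi)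

section

variable {a b : ℤ} {c : ℕ}

theorem exists_two_pow_exactly_dvd_orderOf (hco : IsCoprime a b) (hc : Odd c) {k : ℕ}
    (hk : k ≠ 0) (h : (c : ℤ) ∣ a ^ k + b ^ k) :
    ∃ s, 1 ≤ s ∧ ∀ p : ℕ, p.Prime → p ∣ c →
      2 ^ s ∣ orderOf ((a : ZMod p) * (b : ZMod p)⁻¹) ∧
        ¬ 2 ^ (s + 1) ∣ orderOf ((a : ZMod p) * (b : ZMod p)⁻¹) := by
  obtain ⟨v, m, hm, rfl⟩ := Nat.exists_eq_two_pow_mul_odd hk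
  refine ⟨v + 1, le_add_self, fun p hp hpc => ?_⟩
  have : Fact p.Prime := ⟨hp⟩
  have hpk : (p : ℤ) ∣ a ^ (2 ^ v * m) + b ^ (2 ^ v * m) :=
    (Int.natCast_dvd_natCast.mpr hpc).trans h
  have hpb := not_dvd_right_of_dvd_pow_add_pow hco (Nat.prime_iff_prime_int.mp hp) hk hpk
  obtain ⟨hdvd, hndvd⟩ := (pow_eq_neg_one_iff_orderOf_dvd
    (ZMod.neg_one_ne_one_of_odd (hc.of_dvd_nat hpc)) _ _).mp
    ((ZMod.intCast_mul_inv_pow_eq_neg_one_iff hpb _).mpr hpk)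
  rw [← mul_assoc, ← pow_succ'] at hdvd
  exact Nat.pow_succ_dvd_and_not_dvd_of_dvd_pow_succ_mul Nat.prime_two hm.not_two_dvd_nat
    hdvd hndvd

theorem exists_dvd_pow_add_pow_of_two_pow_exactly_dvd_orderOf (hc : Odd c) {s : ℕ}
    (h : ∀ p : ℕ, p.Prime → p ∣ c →
      2 ^ (s + 1) ∣ orderOf ((a : ZMod p) * (b : ZMod p)⁻¹) ∧
        ¬ 2 ^ (s + 2) ∣ orderOf ((a : ZMod p) * (b : ZMod p)⁻¹)) :
    ∃ k, k ≠ 0 ∧ (c : ℤ) ∣ a ^ k + b ^ k := by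
  obtain ⟨M, hM, hMdvd⟩ := exists_odd_forall_dvd_two_pow_mul (S := c.primeFactors)
    fun p hp => h p (Nat.prime_of_mem_primeFactors hp) (Nat.dvd_of_mem_primeFactors hp)
  have hdvd_add :
      ∀ p : ℕ, p.Prime → p ∣ c → (p : ℤ) ∣ a ^ (2 ^ s * M) + b ^ (2 ^ s * M) := by
    intro p hp hpc
    have : Fact p.Prime := ⟨hp⟩
    obtain ⟨hdvd, hndvd⟩ := h p hp hpc
    have hpb := ZMod.not_dvd_of_orderOf_intCast_mul_inv_ne_zero fun h0 => hndvd (h0 ▸ dvd_zero _)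
    rw [← ZMod.intCast_mul_inv_pow_eq_neg_one_iff hpb, pow_eq_neg_one_iff_orderOf_dvd
      (ZMod.neg_one_ne_one_of_odd (hc.of_dvd_nat hpc)), ← mul_assoc, ← pow_succ']
    exact ⟨hMdvd p (Nat.mem_primeFactors.mpr ⟨hp, hpc, hc.pos.ne'⟩),
      fun hd => Nat.not_pow_succ_dvd_pow_mul two_pos hM.not_two_dvd_nat (hdvd.trans hd)⟩
  refine ⟨2 ^ s * M * c, mul_ne_zero (mul_ne_zero (by positivity) hM.pos.ne') hc.pos.ne', ?_⟩
  rw [Int.natCast_dvd, Nat.dvd_iff_prime_pow_dvd_dvd]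
  intro q j hq hqj
  rcases j.eq_zero_or_pos with rfl | hj
  · exact (pow_zero q).symm ▸ one_dvd _
  have := pow_dvd_pow_add_pow_of_dvd_add hc hqj
    (hdvd_add q hq ((dvd_pow_self q hj.ne').trans hqj))
  rw [← pow_mul, ← pow_mul] at this
  exact Int.natCast_dvd.mp (by exact_mod_cast this)

end

theorem two_good_iff_general
    (a b : ℤ) (ha : Odd a) (hb : Odd b) (hco : IsCoprime a b)
    (c : ℕ) (hc : 0 < c) :
    (∃ k : ℕ, 0 < k ∧ ((2 * c : ℕ) : ℤ) ∣ a ^ k + b ^ k) ↔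
      ((∃ d : ℕ, 0 < d ∧ c = 2 * d ∧
          ∃ k : ℕ, 0 < k ∧ ((4 * d : ℕ) : ℤ) ∣ a ^ k + b ^ k) ∨
        (Odd c ∧ (c = 1 ∨
          ∃ s : ℕ, 1 ≤ s ∧ ∀ p : ℕ, p.Prime → p ∣ c →
            2 ^ s ∣ orderOf ((a : ZMod p) * (b : ZMod p)⁻¹) ∧
              ¬ 2 ^ (s + 1) ∣ orderOf ((a : ZMod p) * (b : ZMod p)⁻¹)))) := by
  have two_dvd k : (2 : ℤ) ∣ a ^ k + b ^ k := (ha.pow.add_odd hb.pow).two_dvd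
  constructor
  · rintro ⟨k, hk, hdvd⟩
    rcases Nat.even_or_odd c with ⟨d, rfl⟩ | hodd
    · refine Or.inl ⟨d, by omega, (two_mul d).symm, k, hk, ?_⟩
      rwa [show 4 * d = 2 * (d + d) by ring]
    refine Or.inr ⟨hodd, or_iff_not_imp_left.mpr fun _ => ?_⟩
    exact exists_two_pow_exactly_dvd_orderOf hco hodd hk.ne'
      ((Int.natCast_dvd_natCast.mpr (dvd_mul_left c 2)).trans hdvd)
  · rintro (⟨d, -, rfl, k, hk, hdvd⟩ | ⟨hodd, rfl | ⟨s, hs, h⟩⟩)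
    · exact ⟨k, hk, by rwa [← mul_assoc]⟩
    · exact ⟨1, one_pos, by simpa using two_dvd 1⟩
    obtain ⟨s, rfl⟩ := Nat.exists_eq_add_of_le' hs
    obtain ⟨k, hk, hdvd⟩ := exists_dvd_pow_add_pow_of_two_pow_exactly_dvd_orderOf hodd h
    have hcop : IsCoprime (2 : ℤ) c := by
      exact_mod_cast Nat.isCoprime_iff_coprime.mpr (Nat.coprime_two_left.mpr hodd)
    exact ⟨k, Nat.pos_of_ne_zero hk, by push_cast; exact hcop.mul_dvd (two_dvd k) hdvd⟩

/-- Let `a` and `b` be coprime odd integers with `a + b ≠ 0`. A positive integer `c`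
is `2`-good if and only if either `c = 2d` with `d` being `4`-good, or `c` is odd and
either `c = 1` or there exists `s ≥ 1` such that for every prime `p ∣ c`, the order of
`a·b⁻¹` modulo `p` is exactly divisible by `2^s`. -/
theorem two_good_iff
    (a b : ℤ) (ha : Odd a) (hb : Odd b) (hco : IsCoprime a b) (hab : a + b ≠ 0)
    (c : ℕ) (hc : 0 < c) :
    (∃ k : ℕ, 0 < k ∧ ((2 * c : ℕ) : ℤ) ∣ a ^ k + b ^ k) ↔
      ((∃ d : ℕ, 0 < d ∧ c = 2 * d ∧
          ∃ k : ℕ, 0 < k ∧ ((4 * d : ℕ) : ℤ) ∣ a ^ k + b ^ k) ∨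
        (Odd c ∧ (c = 1 ∨
          ∃ s : ℕ, 1 ≤ s ∧ ∀ p : ℕ, p.Prime → p ∣ c →
            2 ^ s ∣ orderOf ((a : ZMod p) * (b : ZMod p)⁻¹) ∧
              ¬ 2 ^ (s + 1) ∣ orderOf ((a : ZMod p) * (b : ZMod p)⁻¹)))) :=
  two_good_iff_general a b ha hb hco c hc
end

section
/- Let a and b be coprime odd integers and let γ be a positive integer such that 2^γ exactly divides a + b. Then for every integer β with 0 ≤ β ≤ γ, the set of 2^{β+1}-good integers is a proper subset of the set of 2^β-good integers: every 2^{β+1}-good integer is 2^β-good, and there exists a 2^β-good integer that is not 2^{β+1}-good. Moreover, the set of 2^{γ+1}-good integers is empty. -/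
lemma odd_int_cast_zmod_two (x : ℤ) (hx : Odd x) : (x : ZMod 2) = 1 := by
  have h2 : (2 : ℤ) ∣ x - 1 := by
    obtain ⟨t, rfl⟩ := hx; exact ⟨t, by ring⟩
  have h0 : ((x - 1 : ℤ) : ZMod 2) = 0 :=
    (ZMod.intCast_zmod_eq_zero_iff_dvd (x - 1) 2).mpr (by exact_mod_cast h2)
  push_cast at h0
  rwa [sub_eq_zero] at h0

open Finset in
lemma good_key (a b : ℤ) (ha : Odd a) (hb : Odd b)
    (γ : ℕ) (hγ : 1 ≤ γ) (hndvd : ¬ (2 ^ (γ + 1) : ℤ) ∣ a + b) :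
    ∀ k : ℕ, 0 < k → ¬ (2 ^ (γ + 1) : ℤ) ∣ a ^ k + b ^ k := by
  intro k hk h
  rcases Nat.even_or_odd k with hke | hko
  · -- even case: a^k + b^k ≡ 2 mod 4
    obtain ⟨m, rfl⟩ := hke
    have h4 : (4 : ℤ) ∣ a ^ (m + m) + b ^ (m + m) := by
      refine dvd_trans ?_ h
      have : (2:ℤ)^2 ∣ 2 ^ (γ+1) := pow_dvd_pow 2 (by omega)
      simpa using this
    have h1 : (a ^ m) ^ 2 % 4 = 1 := Int.sq_mod_four_eq_one_of_odd ha.pow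
    have h2 : (b ^ m) ^ 2 % 4 = 1 := Int.sq_mod_four_eq_one_of_odd hb.pow
    have he : a ^ (m + m) + b ^ (m + m) = (a ^ m) ^ 2 + (b ^ m) ^ 2 := by ring
    rw [he] at h4
    omega
  · -- odd case
    set S : ℤ := ∑ i ∈ range k, a ^ i * (-b) ^ (k - 1 - i) with hS
    have hid : S * (a + b) = a ^ k + b ^ k := by
      have := geom_sum₂_mul a (-b) k
      rw [← hS, sub_neg_eq_add] at this
      rw [this, hko.neg_pow, sub_neg_eq_add]
    have hcast : (S : ZMod 2) = 1 := by
      have haz : (a : ZMod 2) = 1 := odd_int_cast_zmod_two a ha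
      have hbz : -(b : ZMod 2) = 1 := by
        have := odd_int_cast_zmod_two (-b) hb.neg
        push_cast at this
        exact this
      have hkz : ((k : ℕ) : ZMod 2) = 1 := by
        have := odd_int_cast_zmod_two (k : ℤ) (by exact_mod_cast hko)
        push_cast at this
        exact this
      rw [hS]
      push_cast
      rw [Finset.sum_congr rfl (fun i _ => by rw [haz, hbz])]
      simpa using hkz
    have hSodd : Odd S := by
      have hnd : ¬ (2 : ℤ) ∣ S := by
        intro h2
        have : (S : ZMod 2) = 0 := by
          rw [ZMod.intCast_zmod_eq_zero_iff_dvd]; exact_mod_cast h2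
        rw [hcast] at this
        exact one_ne_zero this
      rw [Int.odd_iff]; omega
    have hcop : IsCoprime ((2:ℤ) ^ (γ+1)) S :=
      (Int.prime_two.coprime_iff_not_dvd.mpr (by rw [Int.odd_iff] at hSodd; omega)).pow_left
    rw [← hid] at h
    exact hndvd (hcop.dvd_of_dvd_mul_left h)

/-- Let `a`, `b` be coprime odd integers and `γ ≥ 1` with `2^γ ‖ a + b`. Then for every
`β ≤ γ` the set of `2^(β+1)`-good integers is a proper subset of the set of `2^β`-good
integers, and the set of `2^(γ+1)`-good integers is empty. -/
theorem good_chain_strict_and_empty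
    (a b : ℤ) (ha : Odd a) (hb : Odd b) (hco : IsCoprime a b)
    (γ : ℕ) (hγ : 1 ≤ γ) (hdvd : (2 ^ γ : ℤ) ∣ a + b) (hndvd : ¬ (2 ^ (γ + 1) : ℤ) ∣ a + b) :
    (∀ β : ℕ, β ≤ γ →
      ((∀ c : ℕ, 0 < c →
          (∃ k : ℕ, 0 < k ∧ ((2 ^ (β + 1) * c : ℕ) : ℤ) ∣ a ^ k + b ^ k) →
            (∃ k : ℕ, 0 < k ∧ ((2 ^ β * c : ℕ) : ℤ) ∣ a ^ k + b ^ k)) ∧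
        (∃ c : ℕ, 0 < c ∧
          (∃ k : ℕ, 0 < k ∧ ((2 ^ β * c : ℕ) : ℤ) ∣ a ^ k + b ^ k) ∧
            ¬ (∃ k : ℕ, 0 < k ∧ ((2 ^ (β + 1) * c : ℕ) : ℤ) ∣ a ^ k + b ^ k)))) ∧
      ∀ c : ℕ, 0 < c →
        ¬ (∃ k : ℕ, 0 < k ∧ ((2 ^ (γ + 1) * c : ℕ) : ℤ) ∣ a ^ k + b ^ k) := by
  have key := good_key a b ha hb γ hγ hndvd
  constructor
  · intro β hβ
    constructor
    · rintro c hc ⟨k, hk, hd⟩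
      refine ⟨k, hk, dvd_trans ?_ hd⟩
      exact_mod_cast Nat.mul_dvd_mul_right (pow_dvd_pow 2 (Nat.le_succ β)) c
    · refine ⟨2 ^ (γ - β), pow_pos two_pos _, ⟨1, one_pos, ?_⟩, ?_⟩
      · have h1 : ((2 ^ β * 2 ^ (γ - β) : ℕ) : ℤ) = 2 ^ γ := by
          push_cast
          rw [← pow_add]
          congr 1
          omega
        rw [h1]
        simpa using hdvd
      · rintro ⟨k, hk, hd⟩
        have h2 : ((2 ^ (β + 1) * 2 ^ (γ - β) : ℕ) : ℤ) = 2 ^ (γ + 1) := by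
          push_cast
          rw [← pow_add]
          congr 1
          omega
        rw [h2] at hd
        exact key k hk hd
  · rintro c hc ⟨k, hk, hd⟩
    refine key k hk (dvd_trans ?_ hd)
    exact_mod_cast Nat.dvd_mul_right (2 ^ (γ + 1)) c
end

section
/- Let a and b be coprime odd integers and let γ ≥ 2 be an integer such that 2^γ exactly divides a + b. Then a positive integer c is 2^1-oddly-good (i.e., 2c divides a^k + b^k for some odd positive integer k) if and only if there exist an integer i with 0 ≤ i ≤ γ - 1 and an odd positive integer d such that c = 2^i·d and either d = 1 or for every prime p dividing d the multiplicative order of a·b^{-1} modulo p is exactly divisible by 2 (2 divides it but 4 does not). -/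
/-!
For odd `k` the quotient `(a ^ k + b ^ k) / (a + b)` is odd, so the `2`-part of `a ^ k + b ^ k` is
exactly `2 ^ γ`; this is the bound on `i`. For an odd prime `p ∤ b`, `p ∣ a ^ k + b ^ k` says
`(a / b) ^ k = -1` in `ZMod p`, and some odd power of `x` is `-1` exactly when `ord x ≡ 2 (mod 4)`.
Conversely, moduli admitting an odd exponent are closed under `p ↦ p ^ e` for odd `p` (lifting
the exponent) and under coprime products (multiply the exponents, as `x + y ∣ x ^ m + y ^ m` for
odd `m`), so the condition on the primes of `d` suffices, and `2 ^ (i + 1) ∣ a + b` supplies the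
`2`-part.
-/

/-- `n ∈ OG_{(a,b)}(β)` in the paper's notation is `IsOddlyGood a b (2 ^ β * n)`. -/
def IsOddlyGood {R : Type*} [CommRing R] (a b n : R) : Prop :=
  ∃ k : ℕ, Odd k ∧ n ∣ a ^ k + b ^ k

namespace IsOddlyGood

variable {R : Type*} [CommRing R] {a b m n : R}

theorem of_dvd (h : IsOddlyGood a b n) (hmn : m ∣ n) : IsOddlyGood a b m :=
  let ⟨k, hk, hn⟩ := h
  ⟨k, hk, hmn.trans hn⟩

theorem of_dvd_add (h : n ∣ a + b) : IsOddlyGood a b n :=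
  ⟨1, odd_one, by simpa using h⟩

theorem mul (hm : IsOddlyGood a b m) (hn : IsOddlyGood a b n) (hmn : IsCoprime m n) :
    IsOddlyGood a b (m * n) := by
  obtain ⟨k, hk, hm⟩ := hm
  obtain ⟨l, hl, hn⟩ := hn
  refine ⟨k * l, hk.mul hl, hmn.mul_dvd ?_ ?_⟩
  · simpa only [pow_mul] using hm.trans (hl.add_dvd_pow_add_pow (a ^ k) (b ^ k))
  · simpa only [mul_comm k, pow_mul] using hn.trans (hk.add_dvd_pow_add_pow (a ^ l) (b ^ l))

theorem natCast_pow {p : ℕ} (hp : Odd p) (h : IsOddlyGood a b p) (e : ℕ) :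
    IsOddlyGood a b ((p : R) ^ e) := by
  obtain ⟨k, hk, hdvd⟩ := h
  refine ⟨k * p ^ e, hk.mul hp.pow, ?_⟩
  have hlift := dvd_sub_pow_of_dvd_sub (a := a ^ k) (b := -b ^ k) (by rwa [sub_neg_eq_add]) e
  rw [hp.pow.neg_pow, sub_neg_eq_add, ← pow_mul, ← pow_mul] at hlift
  exact (pow_dvd_pow _ e.le_succ).trans hlift

theorem of_forall_prime_dvd {d : ℕ} (hd : Odd d)
    (h : ∀ p : ℕ, p.Prime → p ∣ d → IsOddlyGood a b (p : R)) : IsOddlyGood a b (d : R) := by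
  induction d using Nat.recOnPrimeCoprime with
  | zero => exact absurd hd Nat.not_odd_zero
  | prime_pow p e hp =>
    rcases e.eq_zero_or_pos with rfl | he
    · exact of_dvd_add (by simp)
    · have hpd : p ∣ p ^ e := dvd_pow_self p he.ne'
      exact_mod_cast natCast_pow (hd.of_dvd_nat hpd) (h p hp hpd) e
  | coprime m n _ _ hmn ihm ihn =>
    obtain ⟨hm, hn⟩ := Nat.odd_mul.mp hd
    push_cast
    exact (ihm hm fun p hp hpm => h p hp (hpm.mul_right n)).mul
      (ihn hn fun p hp hpn => h p hp (hpn.mul_left m)) hmn.cast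

end IsOddlyGood

theorem Int.two_pow_dvd_pow_add_pow_iff {a b : ℤ} (ha : Odd a) (hb : Odd b) {k : ℕ} (hk : Odd k)
    (n : ℕ) : 2 ^ n ∣ a ^ k + b ^ k ↔ 2 ^ n ∣ a + b := by
  set S := ∑ i ∈ Finset.range k, a ^ i * (-b) ^ (k - 1 - i)
  have hfac : a ^ k + b ^ k = (a + b) * S := by
    rw [mul_comm, ← sub_neg_eq_add a b, geom_sum₂_mul, hk.neg_pow, sub_neg_eq_add]
  -- modulo `2 ∣ a + b` the geometric sum is `k (-b)^(k-1)`, which is odd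
  have hS : ¬ 2 ∣ S := by
    rw [dvd_geom_sum₂_iff_of_dvd_sub (by rw [sub_neg_eq_add]; exact (ha.add_odd hb).two_dvd),
      ← even_iff_two_dvd, Int.not_even_iff_odd]
    exact hk.natCast.mul hb.neg.pow
  have hcop : IsCoprime (2 ^ n) S := ((Prime.coprime_iff_not_dvd Int.prime_two).mpr hS).pow_left
  rw [hfac]
  exact ⟨hcop.dvd_of_dvd_mul_right, (Dvd.dvd.mul_right · S)⟩

theorem exists_odd_pow_eq_neg_one_iff {R : Type*} [Ring R] [NoZeroDivisors R]
    (h : (-1 : R) ≠ 1) (x : R) :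
    (∃ k : ℕ, Odd k ∧ x ^ k = -1) ↔ 2 ∣ orderOf x ∧ ¬ 4 ∣ orderOf x := by
  constructor
  · rintro ⟨k, hk, hxk⟩
    have hdvd : orderOf x ∣ 2 * k := orderOf_dvd_of_pow_eq_one (by rw [pow_mul', hxk]; simp)
    have hndvd : ¬ orderOf x ∣ k := fun hd => h (hxk ▸ orderOf_dvd_iff_pow_eq_one.mp hd)
    refine ⟨?_, fun h4 => ?_⟩
    · by_contra h2
      exact hndvd ((Nat.prime_two.coprime_iff_not_dvd.mpr h2).symm.dvd_of_dvd_mul_left hdvd)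
    · obtain ⟨j, hj⟩ := h4.trans hdvd
      obtain ⟨t, rfl⟩ := hk
      omega
  · rintro ⟨⟨m, hm⟩, h4⟩
    have hmodd : Odd m := Nat.odd_iff.mpr (by omega)
    have hsq : x ^ m * x ^ m = 1 := by rw [← pow_add, ← two_mul, ← hm, pow_orderOf_eq_one]
    have hne : x ^ m ≠ 1 := fun h1 => by
      have := Nat.le_of_dvd hmodd.pos (orderOf_dvd_of_pow_eq_one h1)
      omega
    exact ⟨m, hmodd, (mul_self_eq_one_iff.mp hsq).resolve_left hne⟩

theorem Int.natCast_dvd_pow_add_pow_iff {p : ℕ} [Fact p.Prime] {a b : ℤ} (hb : (b : ZMod p) ≠ 0)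
    (k : ℕ) : (p : ℤ) ∣ a ^ k + b ^ k ↔ ((a : ZMod p) * (b : ZMod p)⁻¹) ^ k = -1 := by
  rw [← ZMod.intCast_zmod_eq_zero_iff_dvd, mul_pow, inv_pow,
    mul_inv_eq_iff_eq_mul₀ (pow_ne_zero k hb), neg_one_mul, ← add_eq_zero_iff_eq_neg]
  push_cast
  rfl

theorem isOddlyGood_natCast_iff_orderOf {a b : ℤ} (hab : IsCoprime a b) {p : ℕ} (hp : p.Prime)
    (hp_odd : Odd p) :
    IsOddlyGood a b (p : ℤ) ↔ 2 ∣ orderOf ((a : ZMod p) * (b : ZMod p)⁻¹) ∧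
      ¬ 4 ∣ orderOf ((a : ZMod p) * (b : ZMod p)⁻¹) := by
  have := Fact.mk hp
  by_cases hb : (b : ZMod p) = 0
  · refine iff_of_false ?_ (by simp [hb, orderOf_zero])
    rintro ⟨k, hk, hdvd⟩
    rw [← ZMod.intCast_zmod_eq_zero_iff_dvd] at hdvd
    push_cast at hdvd
    rw [hb, zero_pow hk.pos.ne', add_zero, pow_eq_zero_iff hk.pos.ne'] at hdvd
    have := hab.map (Int.castRingHom (ZMod p))
    simp [hdvd, hb] at this
  · simp only [IsOddlyGood, Int.natCast_dvd_pow_add_pow_iff hb]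
    exact exists_odd_pow_eq_neg_one_iff (ZMod.ne_neg_self hp_odd one_ne_zero).symm _

/-- Let `a`, `b` be coprime odd integers and `γ ≥ 2` with `2^γ ‖ a + b`. A positive
integer `c` is `2`-oddly-good if and only if `c = 2^i·d` for some `0 ≤ i ≤ γ - 1` and
some odd positive integer `d` with `d = 1` or with the order of `a·b⁻¹` modulo `p`
exactly divisible by `2` for every prime `p ∣ d`. -/
theorem two_oddly_good_iff
    (a b : ℤ) (ha : Odd a) (hb : Odd b) (hco : IsCoprime a b)
    (γ : ℕ) (hγ : 2 ≤ γ) (hdvd : (2 ^ γ : ℤ) ∣ a + b) (hndvd : ¬ (2 ^ (γ + 1) : ℤ) ∣ a + b)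
    (c : ℕ) (hc : 0 < c) :
    (∃ k : ℕ, 0 < k ∧ Odd k ∧ ((2 * c : ℕ) : ℤ) ∣ a ^ k + b ^ k) ↔
      ∃ i d : ℕ, i ≤ γ - 1 ∧ 0 < d ∧ Odd d ∧ c = 2 ^ i * d ∧
        (d = 1 ∨ ∀ p : ℕ, p.Prime → p ∣ d →
          2 ∣ orderOf ((a : ZMod p) * (b : ZMod p)⁻¹) ∧
            ¬ 4 ∣ orderOf ((a : ZMod p) * (b : ZMod p)⁻¹)) := by
  have h2adic (n : ℕ) : (2 : ℤ) ^ n ∣ a + b ↔ n ≤ γ := by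
    rw [pow_dvd_iff_le_emultiplicity, emultiplicity_eq_coe.mpr ⟨hdvd, hndvd⟩, Nat.cast_le]
  have hcast (i d : ℕ) : ((2 * (2 ^ i * d) : ℕ) : ℤ) = 2 ^ (i + 1) * d := by push_cast; ring
  have hlhs : (∃ k : ℕ, 0 < k ∧ Odd k ∧ ((2 * c : ℕ) : ℤ) ∣ a ^ k + b ^ k) ↔
      IsOddlyGood a b ((2 * c : ℕ) : ℤ) :=
    exists_congr fun k => and_iff_right_of_imp fun h => h.1.pos
  rw [hlhs]
  constructor
  · intro hgood
    obtain ⟨i, d, hd, rfl⟩ := Nat.exists_eq_two_pow_mul_odd hc.ne'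
    rw [hcast] at hgood
    obtain ⟨k, hk, h2⟩ := hgood.of_dvd (dvd_mul_right _ _)
    have hi := (h2adic _).mp ((Int.two_pow_dvd_pow_add_pow_iff ha hb hk _).mp h2)
    refine ⟨i, d, by omega, hd.pos, hd, rfl, Or.inr fun p hp hpd => ?_⟩
    exact (isOddlyGood_natCast_iff_orderOf hco hp (hd.of_dvd_nat hpd)).mp
      (hgood.of_dvd (Dvd.dvd.mul_left (Int.natCast_dvd_natCast.mpr hpd) _))
  · rintro ⟨i, d, hi, -, hd, rfl, hcond⟩
    have hprimes (p : ℕ) (hp : p.Prime) (hpd : p ∣ d) : IsOddlyGood a b (p : ℤ) := by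
      rcases hcond with rfl | horder
      · exact absurd (Nat.dvd_one.mp hpd) hp.ne_one
      · exact (isOddlyGood_natCast_iff_orderOf hco hp (hd.of_dvd_nat hpd)).mpr (horder p hp hpd)
    have hcop : IsCoprime ((2 : ℤ) ^ (i + 1)) d :=
      .pow_left (by exact_mod_cast Nat.isCoprime_iff_coprime.mpr (Nat.coprime_two_left.mpr hd))
    rw [hcast]
    exact .mul (.of_dvd_add ((h2adic _).mpr (by omega))) (.of_forall_prime_dvd hd hprimes) hcop
end

section
/- Let p be an odd prime, l a positive integer, q = p^l, and let F be the finite field with q elements (in Lean, GaloisField p l). Let ν ≥ 0 be an integer and d an odd positive integer not divisible by p, and set m = d·2^{ν+1}. Then there exists a positive integer k such that m divides q^k + 1 if and only if every monic irreducible factor f of the m-th cyclotomic polynomial over F is self-reciprocal, i.e. satisfies f.reverse = C (f.coeff 0) * f (equivalently f equals its monic reciprocal polynomial f* = (f.coeff 0)^{-1}·X^{deg f}·f(1/X)). -/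
open Polynomial

section Aux

variable {p l : ℕ} [hp : Fact p.Prime] {F : Type*} [Field F] [Fintype F] [CharP F p]

private lemma aux_aeval_pow (hq : Fintype.card F = p ^ l) {K : Type*} [Field K] [Algebra F K]
    (f : F[X]) (x : K) (hx : aeval x f = 0) (j : ℕ) :
    aeval (x ^ (p ^ l) ^ j) f = 0 := by
  haveI : CharP K p := charP_of_injective_algebraMap (algebraMap F K).injective p
  set φ : K →+* K := iterateFrobenius K p (l * j) with hφdef
  have hφ : ∀ y : K, φ y = y ^ (p ^ l) ^ j := fun y => by
    rw [hφdef, iterateFrobenius_def, pow_mul]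
  have hcomm : φ.comp (algebraMap F K) = algebraMap F K := by
    ext c
    rw [RingHom.comp_apply, hφ, ← map_pow, ← hq, FiniteField.pow_card_pow]
  calc aeval (x ^ (p ^ l) ^ j) f = eval₂ (algebraMap F K) (φ x) f := by rw [aeval_def, hφ]
    _ = eval₂ (φ.comp (algebraMap F K)) (φ x) f := by rw [hcomm]
    _ = φ (eval₂ (algebraMap F K) x f) := (hom_eval₂ f (algebraMap F K) φ x).symm
    _ = 0 := by rw [← aeval_def, hx, map_zero]

private lemma aux_coeff_zero_ne {m : ℕ} (hm : ¬ p ∣ m) (hm0 : 0 < m)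
    {f : F[X]} (hfc : f ∣ cyclotomic m F) : f.coeff 0 ≠ 0 := by
  intro h0
  have hX : (X : F[X]) ∣ cyclotomic m F := (X_dvd_iff.mpr h0).trans hfc
  haveI : NeZero (m : F) := ⟨fun h => hm ((CharP.cast_eq_zero_iff F p m).mp h)⟩
  have hroot : IsRoot (cyclotomic m F) 0 := by
    rw [IsRoot.def, ← coeff_zero_eq_eval_zero]
    exact X_dvd_iff.mp hX
  have hprim : IsPrimitiveRoot (0 : F) m := isRoot_cyclotomic_iff.mp hroot
  have := hprim.pow_eq_one
  rw [zero_pow hm0.ne'] at this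
  exact zero_ne_one this

private lemma aux_forward (hq : Fintype.card F = p ^ l) {m : ℕ} (hm : ¬ p ∣ m) (hm0 : 0 < m)
    {k : ℕ} (hdvd : m ∣ (p ^ l) ^ k + 1)
    {f : F[X]} (hf : f.Monic) (hirr : Irreducible f) (hfc : f ∣ cyclotomic m F) :
    f.reverse = C (f.coeff 0) * f := by
  haveI := Fact.mk hirr
  set K := AdjoinRoot f with hK
  set ζ : K := AdjoinRoot.root f with hζ
  haveI : CharP K p := charP_of_injective_algebraMap (algebraMap F K).injective p
  have hz : aeval ζ f = 0 := by
    rw [aeval_def, AdjoinRoot.algebraMap_eq]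
    exact AdjoinRoot.eval₂_root f
  have hzc : aeval ζ (cyclotomic m F) = 0 := by
    obtain ⟨g, hg⟩ := hfc
    rw [hg, map_mul, hz, zero_mul]
  haveI : NeZero (m : K) := ⟨fun h => hm ((CharP.cast_eq_zero_iff K p m).mp h)⟩
  have hprim : IsPrimitiveRoot ζ m := by
    rw [← isRoot_cyclotomic_iff (R := K) (n := m)]
    rwa [IsRoot.def, ← map_cyclotomic m (algebraMap F K), eval_map, ← aeval_def]
  have hz0 : ζ ≠ 0 := by
    intro h
    have := hprim.pow_eq_one
    rw [h, zero_pow hm0.ne'] at this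
    exact zero_ne_one this
  have hinv : aeval ζ⁻¹ f = 0 := by
    have h1 : ζ * ζ ^ ((p ^ l) ^ k) = 1 := by
      rw [← pow_succ']
      exact (hprim.pow_eq_one_iff_dvd _).mpr hdvd
    have h2 : ζ ^ ((p ^ l) ^ k) = ζ⁻¹ := eq_inv_of_mul_eq_one_left (by rwa [mul_comm] at h1)
    rw [← h2]
    exact aux_aeval_pow hq f ζ hz k
  have hrev : aeval ζ f.reverse = 0 := by
    haveI : Invertible (ζ⁻¹) := invertibleOfNonzero (inv_ne_zero hz0)
    have := (eval₂_reverse_eq_zero_iff (algebraMap F K) ζ⁻¹ f).mpr (by rwa [← aeval_def])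
    rwa [invOf_eq_inv, inv_inv, ← aeval_def] at this
  have hmin : minpoly F ζ = f := by
    have := AdjoinRoot.minpoly_root hf.ne_zero
    rwa [hf.leadingCoeff, inv_one, map_one, mul_one] at this
  have hdvd2 : f ∣ f.reverse := by
    conv_lhs => rw [← hmin]
    exact minpoly.dvd F ζ hrev
  have hc0 : f.coeff 0 ≠ 0 := aux_coeff_zero_ne hm hm0 hfc
  obtain ⟨t, ht⟩ := hdvd2
  have hrev0 : f.reverse ≠ 0 := by
    rw [Ne, reverse_eq_zero]; exact hf.ne_zero
  have ht0 : t ≠ 0 := by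
    intro h; rw [h, mul_zero] at ht; exact hrev0 ht
  have hdeg : f.reverse.natDegree = f.natDegree := by
    rw [reverse_natDegree, natTrailingDegree_eq_zero.mpr (Or.inr hc0), Nat.sub_zero]
  have htdeg : t.natDegree = 0 := by
    have := natDegree_mul hf.ne_zero ht0
    rw [← ht, hdeg] at this
    omega
  have htC : t = C (t.coeff 0) := (eq_C_of_natDegree_eq_zero htdeg)
  have htc : t.coeff 0 = f.coeff 0 := by
    have h1 : f.reverse.leadingCoeff = f.coeff 0 := by
      rw [reverse_leadingCoeff, trailingCoeff, natTrailingDegree_eq_zero.mpr (Or.inr hc0)]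
    have h2 : f.reverse.leadingCoeff = t.leadingCoeff := by
      rw [ht, leadingCoeff_mul, hf.leadingCoeff, one_mul]
    rw [h1, htC] at h2
    simpa using h2.symm
  rw [ht, htC, htc, mul_comm]

private lemma aux_converse (hq : Fintype.card F = p ^ l) {m : ℕ} (hm : ¬ p ∣ m) (hm0 : 0 < m)
    (hodd : Odd p)
    {f : F[X]} (hf : f.Monic) (hirr : Irreducible f) (hfc : f ∣ cyclotomic m F)
    (hsr : f.reverse = C (f.coeff 0) * f) :
    ∃ k : ℕ, 0 < k ∧ m ∣ (p ^ l) ^ k + 1 := by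
  haveI := Fact.mk hirr
  set K := AdjoinRoot f with hK
  set ζ : K := AdjoinRoot.root f with hζ
  haveI : CharP K p := charP_of_injective_algebraMap (algebraMap F K).injective p
  have hz : aeval ζ f = 0 := by
    rw [aeval_def, AdjoinRoot.algebraMap_eq]
    exact AdjoinRoot.eval₂_root f
  have hzc : aeval ζ (cyclotomic m F) = 0 := by
    obtain ⟨g, hg⟩ := hfc
    rw [hg, map_mul, hz, zero_mul]
  haveI : NeZero (m : K) := ⟨fun h => hm ((CharP.cast_eq_zero_iff K p m).mp h)⟩
  have hprim : IsPrimitiveRoot ζ m := by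
    rw [← isRoot_cyclotomic_iff (R := K) (n := m)]
    rwa [IsRoot.def, ← map_cyclotomic m (algebraMap F K), eval_map, ← aeval_def]
  have hz0 : ζ ≠ 0 := by
    intro h
    have := hprim.pow_eq_one
    rw [h, zero_pow hm0.ne'] at this
    exact zero_ne_one this
  -- ζ⁻¹ is a root of f
  have hrev : aeval ζ f.reverse = 0 := by
    rw [hsr, map_mul, hz, mul_zero]
  have hinv : aeval ζ⁻¹ f = 0 := by
    haveI : Invertible (ζ⁻¹) := invertibleOfNonzero (inv_ne_zero hz0)
    have h := (eval₂_reverse_eq_zero_iff (algebraMap F K) ζ⁻¹ f).mp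
      (by rwa [invOf_eq_inv, inv_inv, ← aeval_def])
    rwa [← aeval_def] at h
  -- finiteness of K
  let pb := AdjoinRoot.powerBasis hf.ne_zero
  haveI : Module.Finite F K := Module.Finite.of_basis pb.basis
  haveI : Finite K := Module.finite_of_finite F
  haveI : Fintype K := Fintype.ofFinite K
  haveI : DecidableEq K := Classical.decEq K
  set n := f.natDegree with hn
  have hnpos : 0 < n := hirr.natDegree_pos
  have hq1 : 1 < p ^ l := hq ▸ Fintype.one_lt_card
  have hcardK : Fintype.card K = (p ^ l) ^ n := by
    rw [Module.card_eq_pow_finrank (K := F) (V := K), hq, pb.finrank, AdjoinRoot.powerBasis_dim]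
  have hzn : ζ ^ (p ^ l) ^ n = ζ := by
    rw [← hcardK]; exact FiniteField.pow_card ζ
  -- Frobenius powers below n move ζ
  have frob_fix : ∀ s : ℕ, 0 < s → s < n → ζ ^ (p ^ l) ^ s ≠ ζ := by
    intro s hs hsn heq
    set φ : K →+* K := iterateFrobenius K p (l * s) with hφdef
    have hφ : ∀ y : K, φ y = y ^ (p ^ l) ^ s := fun y => by
      rw [hφdef, iterateFrobenius_def, pow_mul]
    let ψ : K →ₐ[F] K :=
      { φ with
        commutes' := fun c => by
          show φ _ = _
          rw [hφ, ← map_pow, ← hq, FiniteField.pow_card_pow] }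
    have hψ : ψ = AlgHom.id F K := by
      apply AdjoinRoot.algHom_ext
      show φ (AdjoinRoot.root f) = AdjoinRoot.root f
      rw [hφ]; exact heq
    have hall : ∀ x : K, x ^ (p ^ l) ^ s = x := by
      intro x
      have := DFunLike.congr_fun hψ x
      rw [AlgHom.coe_mk] at this
      rw [← hφ x]
      exact this
    obtain ⟨g, hg⟩ := IsCyclic.exists_generator (α := Kˣ)
    have hog : orderOf g = (p ^ l) ^ n - 1 := by
      rw [orderOf_eq_card_of_forall_mem_zpowers hg, Nat.card_units,
        Nat.card_eq_fintype_card, hcardK]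
    have hgs : g ^ ((p ^ l) ^ s - 1) = 1 := by
      have h1 : g ^ (p ^ l) ^ s = g := Units.ext (by
        rw [Units.val_pow_eq_pow_val]; exact hall (g : K))
      have h2 : g ^ ((p ^ l) ^ s - 1 + 1) = g := by
        rw [Nat.sub_add_cancel (Nat.one_le_pow _ _ (by positivity))]
        exact h1
      rw [pow_succ] at h2
      have h3 : g ^ ((p ^ l) ^ s - 1) * g = 1 * g := by rw [h2, one_mul]
      exact mul_right_cancel h3
    have hdvd' : (p ^ l) ^ n - 1 ∣ (p ^ l) ^ s - 1 := hog ▸ orderOf_dvd_of_pow_eq_one hgs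
    have hle : (p ^ l) ^ n - 1 ≤ (p ^ l) ^ s - 1 := Nat.le_of_dvd (by
      have : 1 < (p ^ l) ^ s := Nat.one_lt_pow hs.ne' hq1
      omega) hdvd'
    have : (p ^ l) ^ n ≤ (p ^ l) ^ s := by
      have h1 : 1 ≤ (p ^ l) ^ s := Nat.one_le_pow _ _ (by positivity)
      omega
    have := (Nat.pow_le_pow_iff_right hq1).mp this
    omega
  -- the conjugates ζ^(q^j), j < n, are distinct
  have hinj : Set.InjOn (fun j : ℕ => ζ ^ (p ^ l) ^ j) (Finset.range n : Set ℕ) := by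
    have key : ∀ i j : ℕ, i < n → j < n → i < j → ζ ^ (p ^ l) ^ i ≠ ζ ^ (p ^ l) ^ j := by
      intro i j hi hj hij heq
      have e1 : (p ^ l) ^ (i + (n - j)) = (p ^ l) ^ i * (p ^ l) ^ (n - j) := pow_add _ _ _
      have e2 : (p ^ l) ^ n = (p ^ l) ^ j * (p ^ l) ^ (n - j) := by
        rw [← pow_add]
        congr 1
        omega
      have h2 : ζ ^ (p ^ l) ^ (i + (n - j)) = ζ := by
        rw [e1, pow_mul, heq, ← pow_mul, ← e2, hzn]
      exact frob_fix (i + (n - j)) (by omega) (by omega) h2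
    intro i hi j hj hij
    simp only [Finset.coe_range, Set.mem_Iio] at hi hj
    by_contra hne
    rcases Nat.lt_or_ge i j with h | h
    · exact key i j hi hj h hij
    · exact key j i hj hi (by omega) hij.symm
  set S : Finset K := (Finset.range n).image (fun j => ζ ^ (p ^ l) ^ j) with hS
  have hScard : S.card = n := by
    rw [hS, Finset.card_image_of_injOn hinj, Finset.card_range]
  set T : Finset K := (f.map (algebraMap F K)).roots.toFinset with hT
  have hmapne : f.map (algebraMap F K) ≠ 0 :=
    (Polynomial.map_ne_zero_iff (algebraMap F K).injective).mpr hf.ne_zero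
  have hmemT : ∀ x : K, aeval x f = 0 → x ∈ T := by
    intro x hx
    rw [hT, Multiset.mem_toFinset, mem_roots hmapne, IsRoot.def, eval_map, ← aeval_def]
    exact hx
  have hST : S ⊆ T := by
    intro x hx
    obtain ⟨j, _, rfl⟩ := Finset.mem_image.mp hx
    exact hmemT _ (aux_aeval_pow hq f ζ hz j)
  have hzT : ζ⁻¹ ∈ T := hmemT _ hinv
  have hTcard : T.card ≤ n := by
    calc T.card ≤ (f.map (algebraMap F K)).roots.card := Multiset.toFinset_card_le _
      _ ≤ (f.map (algebraMap F K)).natDegree := card_roots' _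
      _ = n := natDegree_map _
  have hmemS : ζ⁻¹ ∈ S := by
    by_contra hnot
    have h2 : insert ζ⁻¹ S ⊆ T := Finset.insert_subset hzT hST
    have h3 := Finset.card_le_card h2
    rw [Finset.card_insert_of_notMem hnot, hScard] at h3
    omega
  obtain ⟨j, hjmem, hjz⟩ := Finset.mem_image.mp hmemS
  have hpow1 : ζ ^ ((p ^ l) ^ j + 1) = 1 := by
    rw [pow_add, pow_one, hjz, inv_mul_cancel₀ hz0]
  have hmdvd : m ∣ (p ^ l) ^ j + 1 := (hprim.pow_eq_one_iff_dvd _).mp hpow1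
  rcases Nat.eq_zero_or_pos j with rfl | hjpos
  · -- m ∣ 2, use k = 1 since q is odd
    refine ⟨1, one_pos, ?_⟩
    rw [pow_one]
    have hm2 : m ∣ 2 := by simpa using hmdvd
    exact hm2.trans (Even.two_dvd (hodd.pow.add_one))
  · exact ⟨j, hjpos, hmdvd⟩

end Aux

/-- Let `p` be an odd prime, `q = p^l`, `F` the field with `q` elements, `ν ≥ 0`,
and `d` an odd positive integer with `p ∤ d`; set `m = d·2^(ν+1)`. Then `m` is a good
integer with respect to `(q, 1)` if and only if every monic irreducible factor of the
`m`-th cyclotomic polynomial over `F` is self-reciprocal. -/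
theorem good_iff_cyclotomic_factors_selfReciprocal
    (p : ℕ) [hp : Fact p.Prime] (hodd : Odd p) (l : ℕ) (hl : 0 < l)
    (ν : ℕ) (d : ℕ) (hd : 0 < d) (hdo : Odd d) (hpd : ¬ p ∣ d) :
    (∃ k : ℕ, 0 < k ∧ d * 2 ^ (ν + 1) ∣ (p ^ l) ^ k + 1) ↔
      ∀ f : Polynomial (GaloisField p l), f.Monic → Irreducible f →
        f ∣ Polynomial.cyclotomic (d * 2 ^ (ν + 1)) (GaloisField p l) →
          f.reverse = Polynomial.C (f.coeff 0) * f := by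
  set F := GaloisField p l with hF
  set m := d * 2 ^ (ν + 1) with hmdef
  haveI : Fintype F := Fintype.ofFinite F
  have hq : Fintype.card F = p ^ l := by
    rw [← Nat.card_eq_fintype_card]
    exact GaloisField.card p l hl.ne'
  have hp2 : p ≠ 2 := by
    intro h
    rw [h] at hodd
    exact (Nat.not_odd_iff_even.mpr (even_two)) hodd
  have hm : ¬ p ∣ m := by
    intro h
    rcases (Nat.Prime.dvd_mul hp.out).mp h with h1 | h1
    · exact hpd h1
    · exact hp2 ((Nat.prime_dvd_prime_iff_eq hp.out Nat.prime_two).mp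
        (hp.out.dvd_of_dvd_pow h1))
  have hm0 : 0 < m := by positivity
  constructor
  · rintro ⟨k, _, hdvd⟩ f hf hirr hfc
    exact aux_forward hq hm hm0 hdvd hf hirr hfc
  · intro hall
    have hdegpos : 0 < (cyclotomic m F).natDegree := by
      rw [natDegree_cyclotomic]
      exact Nat.totient_pos.mpr hm0
    obtain ⟨g, hgirr, hgdvd⟩ := Polynomial.exists_irreducible_of_natDegree_pos hdegpos
    have hg0 : g ≠ 0 := hgirr.ne_zero
    set f := g * C g.leadingCoeff⁻¹ with hfdef
    have hfmonic : f.Monic := monic_mul_leadingCoeff_inv hg0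
    have hu : IsUnit (C g.leadingCoeff⁻¹) :=
      isUnit_C.mpr (IsUnit.mk0 _ (inv_ne_zero (leadingCoeff_ne_zero.mpr hg0)))
    have hassoc : Associated g f := associated_mul_unit_right g _ hu
    have hfirr : Irreducible f := hassoc.irreducible hgirr
    have hfdvd : f ∣ cyclotomic m F := (hassoc.symm.dvd).trans hgdvd
    exact aux_converse hq hm hm0 hodd hfmonic hfirr hfdvd (hall f hfmonic hfirr hfdvd)
end

section
/- Let p be an odd prime, let ν ≥ 2 and l ≥ 1 be integers, and let α be an integer with 0 ≤ α < 2^{ν-1} such that p ≡ 5^α (mod 2^{ν+1}) or p ≡ -5^α (mod 2^{ν+1}). Assume that 2^{ν+1} does not divide p^l + 1. Then the multiplicative order of p^l modulo 2^{ν+1} satisfies ord_{2^{ν+1}}(p^l) · gcd(2^{ν-1}, α·l) = 2^{ν-1}. -/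
lemma five_pow_two_pow (n : ℕ) : ∃ u : ℕ, Odd u ∧ 5 ^ (2 ^ n) = 1 + 2 ^ (n + 2) * u := by
  induction n with
  | zero => exact ⟨1, odd_one, by norm_num⟩
  | succ n ih =>
    obtain ⟨u, hu, h⟩ := ih
    refine ⟨u + 2 ^ (n + 1) * u ^ 2, ?_, ?_⟩
    · rcases hu with ⟨j, hj⟩
      exact ⟨j + 2 ^ n * u ^ 2, by subst hj; ring⟩
    · have : (5:ℕ) ^ 2 ^ (n + 1) = (5 ^ 2 ^ n) ^ 2 := by
        rw [← pow_mul]; ring_nf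
      rw [this, h]; ring

lemma five_pow_eq_one (k : ℕ) (hk : 2 ≤ k) : (5 : ZMod (2 ^ k)) ^ (2 ^ (k - 2)) = 1 := by
  obtain ⟨u, hu, h⟩ := five_pow_two_pow (k - 2)
  have hk2 : k - 2 + 2 = k := by omega
  have := congrArg (Nat.cast : ℕ → ZMod (2 ^ k)) h
  push_cast at this
  rw [hk2] at this
  have h0 : (2 : ZMod (2 ^ k)) ^ k = 0 := by
    exact_mod_cast ZMod.natCast_self (2 ^ k)
  rw [this, h0]
  ring

lemma orderOf_five (k : ℕ) (hk : 3 ≤ k) : orderOf (5 : ZMod (2 ^ k)) = 2 ^ (k - 2) := by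
  have h1 := five_pow_eq_one k (by omega)
  have hdvd : orderOf (5 : ZMod (2 ^ k)) ∣ 2 ^ (k - 2) := orderOf_dvd_of_pow_eq_one h1
  obtain ⟨j, hj, hje⟩ := (Nat.dvd_prime_pow Nat.prime_two).mp hdvd
  rcases eq_or_lt_of_le hj with rfl | hlt
  · exact hje
  · exfalso
    have hdvd3 : orderOf (5 : ZMod (2 ^ k)) ∣ 2 ^ (k - 3) := by
      rw [hje]; exact pow_dvd_pow 2 (by omega)
    have h2 : (5 : ZMod (2 ^ k)) ^ (2 ^ (k - 3)) = 1 := by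
      obtain ⟨c, hc⟩ := hdvd3
      rw [hc, pow_mul, pow_orderOf_eq_one, one_pow]
    obtain ⟨u, hu, h⟩ := five_pow_two_pow (k - 3)
    have hk2 : k - 3 + 2 = k - 1 := by omega
    have := congrArg (Nat.cast : ℕ → ZMod (2 ^ k)) h
    push_cast at this
    rw [hk2, h2] at this
    have h0 : ((2 ^ (k - 1) * u : ℕ) : ZMod (2 ^ k)) = 0 := by
      push_cast
      linear_combination -this
    rw [ZMod.natCast_eq_zero_iff] at h0
    have h2u : 2 ∣ u := by
      have hkk : (2:ℕ) ^ k = 2 ^ (k - 1) * 2 := by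
        rw [← pow_succ]; congr 1; omega
      rw [hkk] at h0
      exact (Nat.mul_dvd_mul_iff_left (pow_pos two_pos (k - 1))).mp h0
    exact (Nat.not_even_iff_odd.mpr hu) (even_iff_two_dvd.mpr h2u)
lemma five_pow_ne_neg_one (k : ℕ) (hk : 2 ≤ k) (j : ℕ) :
    (5 : ZMod (2 ^ k)) ^ j ≠ -1 := by
  intro h
  have h4 : (4 : ℕ) ∣ 2 ^ k := by
    have : (4:ℕ) = 2 ^ 2 := by norm_num
    rw [this]; exact pow_dvd_pow 2 hk
  have := congrArg (ZMod.castHom h4 (ZMod 4)) h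
  rw [map_pow, map_neg, map_one] at this
  have h5 : (ZMod.castHom h4 (ZMod 4)) (5 : ZMod (2 ^ k)) = 1 := by
    have : ((5:ℕ) : ZMod (2 ^ k)) = (5 : ZMod (2 ^ k)) := by push_cast; ring
    rw [← this, map_natCast]; decide
  rw [h5, one_pow] at this
  exact absurd this (by decide)

lemma orderOf_neg_five_pow (k : ℕ) (hk : 2 ≤ k) (j : ℕ)
    (heven : Even (orderOf ((5 : ZMod (2 ^ k)) ^ j))) :
    orderOf (-(5 : ZMod (2 ^ k)) ^ j) = orderOf ((5 : ZMod (2 ^ k)) ^ j) := by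
  set x := (5 : ZMod (2 ^ k)) ^ j with hx
  have hd1 : (-x) ^ orderOf x = 1 := by
    rw [heven.neg_pow, pow_orderOf_eq_one]
  have he : orderOf (-x) ∣ orderOf x := orderOf_dvd_of_pow_eq_one hd1
  rcases (orderOf (-x)).even_or_odd with hev | hod
  · refine Nat.dvd_antisymm he (orderOf_dvd_of_pow_eq_one ?_)
    rw [← hev.neg_pow, pow_orderOf_eq_one]
  · exfalso
    have hpos : 0 < orderOf (-x) := by
      rcases Nat.eq_zero_or_pos (orderOf (-x)) with h0 | h
      · rw [h0] at hod; exact absurd hod (by decide)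
      · exact h
    have : (-x) ^ orderOf (-x) = 1 := pow_orderOf_eq_one (-x) |>.symm ▸ rfl
    have h1 : -(x ^ orderOf (-x)) = 1 := by
      rw [← hod.neg_pow, pow_orderOf_eq_one]
    have h2 : x ^ orderOf (-x) = -1 := by linear_combination -h1
    rw [hx, ← pow_mul] at h2
    exact five_pow_ne_neg_one k hk _ h2

/-- Let `p` be an odd prime, `ν ≥ 2`, `l ≥ 1`, and `α < 2^(ν-1)` with
`p ≡ ±5^α (mod 2^(ν+1))`. If `2^(ν+1) ∤ p^l + 1` then
`ord_{2^(ν+1)}(p^l) · gcd(2^(ν-1), α·l) = 2^(ν-1)`. -/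
theorem orderOf_pow_mod_two_pow
    (p : ℕ) (hp : p.Prime) (hodd : Odd p) (ν l : ℕ) (hν : 2 ≤ ν) (hl : 1 ≤ l)
    (α : ℕ) (hα : α < 2 ^ (ν - 1))
    (hcong : (p : ℤ) ≡ 5 ^ α [ZMOD (2 ^ (ν + 1))] ∨ (p : ℤ) ≡ -5 ^ α [ZMOD (2 ^ (ν + 1))])
    (hne : ¬ 2 ^ (ν + 1) ∣ p ^ l + 1) :
    orderOf (((p ^ l : ℕ) : ZMod (2 ^ (ν + 1)))) * Nat.gcd (2 ^ (ν - 1)) (α * l) =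
      2 ^ (ν - 1) := by
  haveI : NeZero ((2:ℕ) ^ (ν + 1)) := ⟨pow_ne_zero _ two_ne_zero⟩
  have hord5 : orderOf (5 : ZMod (2 ^ (ν + 1))) = 2 ^ (ν - 1) := by
    have h := orderOf_five (ν + 1) (by omega)
    rwa [show ν + 1 - 2 = ν - 1 from by omega] at h
  -- translate congruence to ZMod
  have hmod : ((2 ^ (ν + 1) : ℕ) : ℤ) = 2 ^ (ν + 1) := by push_cast; ring
  have hP : ((p : ℕ) : ZMod (2 ^ (ν + 1))) = 5 ^ α ∨
      ((p : ℕ) : ZMod (2 ^ (ν + 1))) = -5 ^ α := by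
    rcases hcong with h | h
    · left
      have := (ZMod.intCast_eq_intCast_iff _ _ _).mpr (hmod ▸ h)
      push_cast at this ⊢
      exact this
    · right
      have := (ZMod.intCast_eq_intCast_iff _ _ _).mpr (hmod ▸ h)
      push_cast at this ⊢
      exact this
  set m := α * l with hm
  have hx : ((p ^ l : ℕ) : ZMod (2 ^ (ν + 1))) = (5 : ZMod (2 ^ (ν + 1))) ^ m ∨
      ((p ^ l : ℕ) : ZMod (2 ^ (ν + 1))) = -(5 : ZMod (2 ^ (ν + 1))) ^ m := by
    have hcast : ((p ^ l : ℕ) : ZMod (2 ^ (ν + 1))) = ((p : ℕ) : ZMod (2 ^ (ν + 1))) ^ l := by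
      push_cast; ring
    rcases hP with h | h
    · left; rw [hcast, h, ← pow_mul]
    · rcases Nat.even_or_odd l with he | ho
      · left; rw [hcast, h, he.neg_pow, ← pow_mul]
      · right; rw [hcast, h, ho.neg_pow, ← pow_mul]
  have key : orderOf ((5 : ZMod (2 ^ (ν + 1))) ^ m) * Nat.gcd (2 ^ (ν - 1)) m
      = 2 ^ (ν - 1) := by
    rcases Nat.eq_zero_or_pos m with h0 | hpos
    · rw [h0]; simp
    · rw [orderOf_pow' _ hpos.ne', hord5]
      exact Nat.div_mul_cancel (Nat.gcd_dvd_left _ _)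
  rcases hx with h | h
  · rw [h]; exact key
  · -- exclude 5^m = 1
    have hne1 : (5 : ZMod (2 ^ (ν + 1))) ^ m ≠ 1 := by
      intro h1
      apply hne
      have : ((p ^ l + 1 : ℕ) : ZMod (2 ^ (ν + 1))) = 0 := by
        push_cast
        rw [show ((p ^ l : ℕ) : ZMod (2 ^ (ν + 1))) = ((p : ℕ) : ZMod (2 ^ (ν + 1))) ^ l
          from by push_cast; ring] at h
        push_cast at h
        rw [h, h1]
        ring
      exact (ZMod.natCast_eq_zero_iff _ _).mp this
    have hdvd : orderOf ((5 : ZMod (2 ^ (ν + 1))) ^ m) ∣ 2 ^ (ν - 1) :=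
      ⟨Nat.gcd (2 ^ (ν - 1)) m, key.symm⟩
    have heven : Even (orderOf ((5 : ZMod (2 ^ (ν + 1))) ^ m)) := by
      obtain ⟨t, ht, hte⟩ := (Nat.dvd_prime_pow Nat.prime_two).mp hdvd
      have ht0 : t ≠ 0 := by
        rintro rfl
        rw [pow_zero] at hte
        exact hne1 (orderOf_eq_one_iff.mp hte)
      rw [hte]
      exact (Nat.even_pow).mpr ⟨even_two, ht0⟩
    rw [h, orderOf_neg_five_pow (ν + 1) (by omega) m heven]
    exact key
end
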